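/- arXiv:1003.5457 — 7 statements merged into one kernel-verified Lean document; each statement's English description precedes it below -/
import Mathlib

section
/- Let φ : ℝ → [0,∞] be a proper closed convex function with φ(1) = 0, and let φ* be its convex conjugate φ*(t) = sup_x (t·x − φ(x)). Then φ*(0) = 0 and the endpoints of the domain of φ* satisfy a_{φ*} = lim_{y→−∞} φ(y)/y and b_{φ*} = lim_{y→+∞} φ(y)/y. -/
open MeasureTheory Filter Topology Set
open scoped ENNReal NNReal Classical

noncomputable section

variable {X : Type*} [MeasurableSpace X]

/-- The φ-divergence ∫ φ(dQ/dP) dP for a signed measure `Q` absolutely continuous w.r.t. `P`. -/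
def div (φ : ℝ → ℝ≥0∞) (Q : SignedMeasure X) (P : Measure X) : ℝ≥0∞ :=
  ∫⁻ x, φ (Q.rnDeriv P x) ∂P

/-- The φ-divergence, set to `⊤` when `Q` is not absolutely continuous w.r.t. `P`. -/
def divext (φ : ℝ → ℝ≥0∞) (Q : SignedMeasure X) (P : Measure X) : ℝ≥0∞ :=
  if Q ≪ᵥ P.toENNRealVectorMeasure then div φ Q P else ⊤

/-- Integral of a real function against a signed measure. -/
def sint (Q : SignedMeasure X) (f : X → ℝ) : ℝ :=
  ∫ x, f x ∂Q.toJordanDecomposition.posPart - ∫ x, f x ∂Q.toJordanDecomposition.negPart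

/-- The τ_F topology on signed measures: the coarsest topology making `Q ↦ ∫ f dQ`
continuous for every `f` which is bounded measurable or belongs to `F`. -/
def tauTop (F : Set (X → ℝ)) : TopologicalSpace (SignedMeasure X) :=
  ⨅ f ∈ {f : X → ℝ | Measurable f ∧ ∃ C, ∀ x, |f x| ≤ C} ∪ F,
    TopologicalSpace.induced (fun Q => sint Q f) inferInstance

/-- Fenchel–Legendre conjugate of an `[0,∞]`-valued function on ℝ. -/
def conjE (φ : ℝ → ℝ≥0∞) (t : ℝ) : EReal :=
  ⨆ x : ℝ, ((t * x : ℝ) : EReal) - ((φ x : ℝ≥0∞) : EReal)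

/-- The nonnegative part of an extended real, as an element of `[0,∞]`. -/
def etoE (e : EReal) : ℝ≥0∞ := if e = ⊤ then ⊤ else ENNReal.ofReal e.toReal

/-- Extended-real-valued integral of an `EReal`-valued function. -/
def eint (P : Measure X) (g : X → EReal) : EReal :=
  ((∫⁻ x, etoE (g x) ∂P : ℝ≥0∞) : EReal) - ((∫⁻ x, etoE (-(g x)) ∂P : ℝ≥0∞) : EReal)

/-!
A finite bound `φ*(t) ≤ C` says exactly that `φ y ≥ t y - C` for all `y`, which forces
`φ y / y > c` eventually for every `c < t`. Conversely, if `φ x₀ = 0` and `φ y₀ ≥ t (y₀ - x₀)` at a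
single `y₀ > x₀`, convexity keeps `φ` above the line of slope `t` through `x₀` beyond `y₀`, so
`φ*(t) < ∞`. Hence for `t > sup dom φ*` we get `φ y < t (y - x₀)` for all `y > x₀`, and `φ y / y`
is eventually below every `c > t`. The limit at `-∞` follows by applying this to `y ↦ φ (-y)`,
whose conjugate is `t ↦ φ*(-t)`.
-/

lemma EReal.sSup_neg_image (S : Set EReal) : sSup (Neg.neg '' S) = -sInf S := by
  refine le_antisymm (sSup_le ?_) (EReal.neg_le.2 (le_sInf fun x hx => ?_))
  · rintro _ ⟨x, hx, rfl⟩
    exact EReal.neg_le_neg_iff.2 (sInf_le hx)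
  · exact EReal.neg_le.1 (le_sSup (mem_image_of_mem _ hx))

lemma EReal.div_neg (a b : EReal) : a / -b = -(a / b) := by
  rw [EReal.div_eq_inv_mul, EReal.div_eq_inv_mul, EReal.inv_neg, neg_mul]

section
variable {φ : ℝ → ℝ≥0∞}

lemma conjE_le_coe_iff {t C : ℝ} : conjE φ t ≤ C ↔ ∀ x, ENNReal.ofReal (t * x - C) ≤ φ x := by
  refine iSup_le_iff.trans (forall_congr' fun x => ?_)
  induction φ x using ENNReal.recTopCoe with
  | top => simp
  | coe r =>
    rw [EReal.coe_nnreal_eq_coe_real, ← EReal.coe_sub, EReal.coe_le_coe_iff,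
      ENNReal.ofReal_le_iff_le_toReal ENNReal.coe_ne_top, ENNReal.coe_toReal]
    constructor <;> intro h <;> linarith

lemma conjE_zero_le_zero : conjE φ 0 ≤ 0 :=
  conjE_le_coe_iff.2 fun x => by simp

lemma conjE_zero (hone : φ 1 = 0) : conjE φ 0 = 0 :=
  le_antisymm conjE_zero_le_zero (le_iSup_of_le 1 (by simp [hone]))

lemma conjE_comp_neg (t : ℝ) : conjE (fun x => φ (-x)) t = conjE φ (-t) := by
  rw [conjE, ← (Equiv.neg ℝ).iSup_comp, conjE]
  simp only [Equiv.neg_apply, neg_neg, mul_neg, neg_mul]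

lemma ofReal_mul_sub_le_of_convexOn (hconv : ConvexOn ℝ≥0 univ φ) {x₀ y x t : ℝ}
    (hx₀ : φ x₀ = 0) (hy : x₀ < y) (hyx : y ≤ x) (h : ENNReal.ofReal (t * (y - x₀)) ≤ φ y) :
    ENNReal.ofReal (t * (x - x₀)) ≤ φ x := by
  have hx : 0 < x - x₀ := by linarith
  set b : ℝ≥0 := Real.toNNReal ((y - x₀) / (x - x₀))
  set a : ℝ≥0 := Real.toNNReal ((x - y) / (x - x₀))
  have hb : (b : ℝ) = (y - x₀) / (x - x₀) := Real.coe_toNNReal _ (by positivity)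
  have ha : (a : ℝ) = (x - y) / (x - x₀) := Real.coe_toNNReal _ (div_nonneg (by linarith) hx.le)
  have hb0 : b ≠ 0 := by
    rw [← NNReal.coe_ne_zero, hb]; positivity
  have hab : a + b = 1 := by
    rw [← NNReal.coe_inj, NNReal.coe_add, ha, hb, NNReal.coe_one]
    field_simp
    ring
  have hy_eq : a • x₀ + b • x = y := by
    rw [NNReal.smul_def, NNReal.smul_def, smul_eq_mul, smul_eq_mul, ha, hb]
    field_simp
    ring
  have hφy : φ y ≤ b * φ x := by
    simpa [hy_eq, hx₀, ENNReal.smul_def] using hconv.2 (mem_univ x₀) (mem_univ x) a.2 b.2 hab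
  have hscale : ENNReal.ofReal (t * (y - x₀)) = b * ENNReal.ofReal (t * (x - x₀)) := by
    rw [← ENNReal.ofReal_coe_nnreal, ← ENNReal.ofReal_mul NNReal.zero_le_coe, hb]
    congr 1
    field_simp
  rw [hscale] at h
  exact (ENNReal.mul_le_mul_iff_right (by simpa using hb0) ENNReal.coe_ne_top).1 (h.trans hφy)

lemma conjE_le_of_ofReal_le (hconv : ConvexOn ℝ≥0 univ φ) {x₀ y t : ℝ} (hx₀ : φ x₀ = 0)
    (ht : 0 ≤ t) (hy : x₀ < y) (h : ENNReal.ofReal (t * (y - x₀)) ≤ φ y) :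
    conjE φ t ≤ (t * y : ℝ) := by
  refine conjE_le_coe_iff.2 fun x => ?_
  rcases le_or_gt x y with hxy | hyx
  · rw [ENNReal.ofReal_of_nonpos (by nlinarith)]
    exact bot_le
  · calc ENNReal.ofReal (t * x - t * y) ≤ ENNReal.ofReal (t * (x - x₀)) :=
          ENNReal.ofReal_le_ofReal (by nlinarith)
      _ ≤ φ x := ofReal_mul_sub_le_of_convexOn hconv hx₀ hy hyx.le h

lemma eventually_lt_div_atTop {t c : ℝ} (ht : conjE φ t ≠ ⊤) (hct : c < t) :
    ∀ᶠ y : ℝ in atTop, (c : EReal) < (φ y : EReal) / y := by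
  obtain ⟨C, hC, -⟩ := EReal.exists_between_coe_real (lt_top_iff_ne_top.2 ht)
  have hφ := conjE_le_coe_iff.1 hC.le
  filter_upwards [eventually_gt_atTop 0, eventually_gt_atTop (C / (t - c))] with y hy hyC
  have hCy : C < (t - c) * y := (div_lt_iff₀' (by linarith)).1 hyC
  rw [EReal.lt_div_iff (by exact_mod_cast hy) (EReal.coe_ne_top y), ← EReal.coe_mul]
  calc ((c * y : ℝ) : EReal) < (t * y - C : ℝ) := by
          exact_mod_cast (show c * y < t * y - C by linarith)
    _ ≤ (ENNReal.ofReal (t * y - C) : EReal) := by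
          rw [EReal.coe_ennreal_ofReal]; exact_mod_cast le_max_left (t * y - C) 0
    _ ≤ φ y := EReal.coe_ennreal_le_coe_ennreal_iff.2 (hφ y)

lemma eventually_div_lt_atTop (hconv : ConvexOn ℝ≥0 univ φ) {x₀ t c : ℝ} (hx₀ : φ x₀ = 0)
    (ht : conjE φ t = ⊤) (ht₀ : 0 ≤ t) (htc : t < c) :
    ∀ᶠ y : ℝ in atTop, (φ y : EReal) / y < c := by
  filter_upwards [eventually_gt_atTop (max x₀ 0), eventually_gt_atTop (-(t * x₀) / (c - t))]
    with y hy hyc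
  rw [max_lt_iff] at hy
  have hφy : φ y < ENNReal.ofReal (t * (y - x₀)) := by
    by_contra! h
    exact EReal.coe_ne_top _ (top_le_iff.1 (ht ▸ conjE_le_of_ofReal_le hconv hx₀ ht₀ hy.1 h))
  have hty : t * (y - x₀) ≤ c * y := by
    have := (div_lt_iff₀ (by linarith)).1 hyc
    nlinarith
  rw [EReal.div_lt_iff (by exact_mod_cast hy.2) (EReal.coe_ne_top y), ← EReal.coe_mul]
  calc (φ y : EReal) < (ENNReal.ofReal (t * (y - x₀)) : EReal) := by exact_mod_cast hφy
    _ = (t * (y - x₀) : ℝ) := by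
          rw [EReal.coe_ennreal_ofReal, max_eq_left (mul_nonneg ht₀ (by linarith))]
    _ ≤ (c * y : ℝ) := by exact_mod_cast hty

theorem tendsto_div_atTop_sSup_dom_conjE (hconv : ConvexOn ℝ≥0 univ φ) {x₀ : ℝ}
    (hx₀ : φ x₀ = 0) :
    Tendsto (fun y : ℝ => (φ y : EReal) / y) atTop
      (𝓝 (sSup ((fun t : ℝ => (t : EReal)) '' {t | conjE φ t ≠ ⊤}))) := by
  set D := (fun t : ℝ => (t : EReal)) '' {t | conjE φ t ≠ ⊤}
  refine tendsto_order.2 ⟨fun c hc => ?_, fun c hc => ?_⟩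
  · obtain ⟨_, ⟨t, ht, rfl⟩, hct⟩ := lt_sSup_iff.1 hc
    obtain ⟨c', hcc', hc't⟩ := EReal.exists_between_coe_real hct
    filter_upwards [eventually_lt_div_atTop ht (EReal.coe_lt_coe_iff.1 hc't)] with y hy
    exact hcc'.trans hy
  · obtain ⟨c', hc', hc'c⟩ := EReal.exists_between_coe_real hc
    obtain ⟨t, ht, htc'⟩ := EReal.exists_between_coe_real hc'
    have h0D : (0 : EReal) ∈ D :=
      ⟨0, ne_top_of_le_ne_top EReal.zero_ne_top conjE_zero_le_zero, rfl⟩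
    have ht₀ : 0 ≤ t := EReal.coe_nonneg.1 ((le_sSup h0D).trans ht.le)
    have htop : conjE φ t = ⊤ := by
      by_contra h
      exact (le_sSup (mem_image_of_mem _ h)).not_gt ht
    filter_upwards [eventually_div_lt_atTop hconv hx₀ htop ht₀ (EReal.coe_lt_coe_iff.1 htc')]
      with y hy
    exact hy.trans hc'c

theorem tendsto_div_atBot_sInf_dom_conjE (hconv : ConvexOn ℝ≥0 univ φ) {x₀ : ℝ}
    (hx₀ : φ x₀ = 0) :
    Tendsto (fun y : ℝ => (φ y : EReal) / y) atBot
      (𝓝 (sInf ((fun t : ℝ => (t : EReal)) '' {t | conjE φ t ≠ ⊤}))) := by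
  have hconv' : ConvexOn ℝ≥0 univ (fun x => φ (-x)) := by
    simpa [Function.comp_def] using hconv.comp_linearMap (-LinearMap.id : ℝ →ₗ[ℝ≥0] ℝ)
  have h := tendsto_div_atTop_sSup_dom_conjE hconv' (x₀ := -x₀) (by simpa using hx₀)
  have hdom : (fun t : ℝ => (t : EReal)) '' {t | conjE (fun x => φ (-x)) t ≠ ⊤} =
      Neg.neg '' ((fun t : ℝ => (t : EReal)) '' {t | conjE φ t ≠ ⊤}) := by
    ext s
    simp only [conjE_comp_neg, mem_image, mem_ofPred_eq, exists_exists_and_eq_and]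
    exact (Equiv.neg ℝ).exists_congr fun t => by simp
  rw [hdom, EReal.sSup_neg_image] at h
  have := (continuous_neg.tendsto _).comp (h.comp tendsto_neg_atBot_atTop)
  simpa [Function.comp_def, EReal.div_neg] using this

end

theorem stmt0_general (φ : ℝ → ℝ≥0∞)
    (hconv : ConvexOn ℝ≥0 Set.univ φ)
    (hone : φ 1 = 0) :
    conjE φ 0 = 0 ∧
    Tendsto (fun y : ℝ => ((φ y : ℝ≥0∞) : EReal) / (y : EReal)) atBot
      (𝓝 (sInf ((fun t : ℝ => (t : EReal)) '' {t : ℝ | conjE φ t ≠ ⊤}))) ∧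
    Tendsto (fun y : ℝ => ((φ y : ℝ≥0∞) : EReal) / (y : EReal)) atTop
      (𝓝 (sSup ((fun t : ℝ => (t : EReal)) '' {t : ℝ | conjE φ t ≠ ⊤}))) :=
  ⟨conjE_zero hone, tendsto_div_atBot_sInf_dom_conjE hconv hone,
    tendsto_div_atTop_sSup_dom_conjE hconv hone⟩

/-- For a proper closed convex `φ : ℝ → [0,∞]` with `φ 1 = 0` whose domain is
an interval with endpoints `a_φ < 1 < b_φ`, the conjugate satisfies `φ*(0) = 0`, and the
endpoints of the domain of `φ*` are `a_{φ*} = lim_{y→−∞} φ(y)/y` and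
`b_{φ*} = lim_{y→+∞} φ(y)/y`. -/
theorem stmt0 (φ : ℝ → ℝ≥0∞)
    (hconv : ConvexOn ℝ≥0 Set.univ φ)
    (hlsc : LowerSemicontinuous φ)
    (hone : φ 1 = 0)
    (hint : (1 : ℝ) ∈ interior {x : ℝ | φ x ≠ ⊤}) :
    conjE φ 0 = 0 ∧
    Tendsto (fun y : ℝ => ((φ y : ℝ≥0∞) : EReal) / (y : EReal)) atBot
      (𝓝 (sInf ((fun t : ℝ => (t : EReal)) '' {t : ℝ | conjE φ t ≠ ⊤}))) ∧
    Tendsto (fun y : ℝ => ((φ y : ℝ≥0∞) : EReal) / (y : EReal)) atTop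
      (𝓝 (sSup ((fun t : ℝ => (t : EReal)) '' {t : ℝ | conjE φ t ≠ ⊤}))) :=
  stmt0_general φ hconv hone
end
end

section
/- Let P be a probability measure and φ : ℝ → [0,∞] a proper closed convex function with φ(1)=0 which is strictly convex in a neighborhood of 1. Then for any finite signed measure Q absolutely continuous with respect to P, φ(Q,P) = 0 if and only if Q = P. -/
open MeasureTheory Filter Topology Set
open scoped ENNReal NNReal Classical

noncomputable section

variable {X : Type*} [MeasurableSpace X]

/-! The zero set of the convex function `φ` is convex, and strict convexity around `1` makes `1`
an isolated point of it; so `φ` vanishes only at `1`. Hence `φ(Q,P) = 0` iff `dQ/dP = 1`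
`P`-a.e., iff `Q = P`. -/

theorem Convex.eq_of_forall_mem_ball_eq {E : Type*} [NormedAddCommGroup E] [NormedSpace ℝ E]
    {s : Set E} (hs : Convex ℝ s) {x₀ t : E} {ε : ℝ} (hε : 0 < ε) (hx₀ : x₀ ∈ s)
    (hiso : ∀ u ∈ s, u ∈ Metric.ball x₀ ε → u = x₀) (ht : t ∈ s) : t = x₀ := by
  by_contra hne
  have hsmall : ∀ᶠ b in 𝓝[>] (0 : ℝ), b * dist x₀ t < ε ∧ b ∈ Ioo 0 1 := by
    have hlim : Tendsto (fun b : ℝ => b * dist x₀ t) (𝓝[>] 0) (𝓝 0) :=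
      ((continuous_mul_const _).tendsto' 0 0 (zero_mul _)).mono_left nhdsWithin_le_nhds
    exact (hlim.eventually (gt_mem_nhds hε)).and (Ioo_mem_nhdsGT one_pos)
  obtain ⟨b, hbε, hb⟩ := hsmall.exists
  have hmem : AffineMap.lineMap x₀ t b ∈ s := hs.lineMap_mem hx₀ ht ⟨hb.1.le, hb.2.le⟩
  have hball : AffineMap.lineMap x₀ t b ∈ Metric.ball x₀ ε := by
    rwa [Metric.mem_ball, dist_lineMap_left, Real.norm_of_nonneg hb.1.le]
  rcases AffineMap.lineMap_eq_left_iff.1 (hiso _ hmem hball) with h | h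
  · exact hne h.symm
  · exact hb.1.ne' h

theorem ConvexOn.eq_of_apply_eq_zero {E : Type*} [NormedAddCommGroup E] [NormedSpace ℝ E]
    {φ : E → ℝ≥0∞} (hconv : ConvexOn ℝ≥0 univ φ) {x₀ t : E} {ε : ℝ} (hε : 0 < ε)
    (hx₀ : φ x₀ = 0) (hiso : ∀ u ∈ Metric.ball x₀ ε, φ u = 0 → u = x₀) (ht : φ t = 0) :
    t = x₀ := by
  have hzero : Convex ℝ {x ∈ univ | φ x ≤ 0} := NNReal.convex_iff.1 (hconv.convex_le 0)
  exact hzero.eq_of_forall_mem_ball_eq hε ⟨mem_univ _, hx₀.le⟩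
    (fun u hu hball => hiso u hball (nonpos_iff_eq_zero.1 hu.2)) ⟨mem_univ _, ht.le⟩

theorem eq_one_of_apply_eq_zero_of_strict {φ : ℝ → ℝ≥0∞} (hone : φ 1 = 0) {ε : ℝ}
    (hstrict : ∀ x ∈ Ioo (1 - ε) (1 + ε), ∀ y ∈ Ioo (1 - ε) (1 + ε),
      x ≠ y → ∀ a b : ℝ, 0 < a → 0 < b → a + b = 1 →
        φ (a * x + b * y) < ENNReal.ofReal a * φ x + ENNReal.ofReal b * φ y) :
    ∀ u ∈ Metric.ball 1 ε, φ u = 0 → u = 1 := by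
  intro u hu hu0
  by_contra hne
  rw [Real.ball_eq_Ioo] at hu
  have h1 : (1 : ℝ) ∈ Ioo (1 - ε) (1 + ε) := ⟨by linarith [hu.1, hu.2], by linarith [hu.1, hu.2]⟩
  have hmid := hstrict u hu 1 h1 hne (1 / 2) (1 / 2) (by norm_num) (by norm_num) (by norm_num)
  simp [hu0, hone] at hmid

theorem withDensityᵥ_one (P : Measure X) [IsFiniteMeasure P] :
    P.withDensityᵥ (fun _ => (1 : ℝ)) = P.toSignedMeasure := by
  ext i hi
  rw [withDensityᵥ_apply (integrable_const 1) hi, Measure.toSignedMeasure_apply_measurable hi]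
  simp

theorem SignedMeasure.eq_toSignedMeasure_iff_rnDeriv_ae_eq_one {Q : SignedMeasure X}
    {P : Measure X} [IsFiniteMeasure P] (hQ : Q ≪ᵥ P.toENNRealVectorMeasure) :
    Q = P.toSignedMeasure ↔ Q.rnDeriv P =ᵐ[P] fun _ => 1 := by
  conv_lhs => rw [← Q.withDensityᵥ_rnDeriv_eq P hQ, ← withDensityᵥ_one]
  exact (Q.integrable_rnDeriv P).withDensityᵥ_eq_iff (integrable_const 1)

/-- Let `P` be a probability measure and `φ : ℝ → [0,∞]` a proper closed
convex function with `φ 1 = 0` which is strictly convex in a neighborhood of `1`.  Then for any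
finite signed measure `Q ≪ P`, `φ(Q,P) = 0` if and only if `Q = P`. -/
theorem stmt5 (P : Measure X) [IsProbabilityMeasure P]
    (φ : ℝ → ℝ≥0∞)
    (hconv : ConvexOn ℝ≥0 Set.univ φ)
    (hlsc : LowerSemicontinuous φ)
    (hone : φ 1 = 0)
    (hstrict : ∃ ε > (0 : ℝ), ∀ x ∈ Ioo (1 - ε) (1 + ε), ∀ y ∈ Ioo (1 - ε) (1 + ε),
      x ≠ y → ∀ a b : ℝ, 0 < a → 0 < b → a + b = 1 →
        φ (a * x + b * y) < ENNReal.ofReal a * φ x + ENNReal.ofReal b * φ y) :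
    ∀ Q : SignedMeasure X, Q ≪ᵥ P.toENNRealVectorMeasure →
      (div φ Q P = 0 ↔ Q = P.toSignedMeasure) := by
  intro Q hQ
  obtain ⟨ε, hε, hstrict⟩ := hstrict
  have hzero : ∀ t, φ t = 0 ↔ t = 1 := fun t =>
    ⟨hconv.eq_of_apply_eq_zero hε hone (eq_one_of_apply_eq_zero_of_strict hone hstrict),
      fun h => h ▸ hone⟩
  have hmeas : Measurable fun x => φ (Q.rnDeriv P x) :=
    hlsc.measurable.comp (Q.measurable_rnDeriv P)
  rw [div, lintegral_eq_zero_iff hmeas,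
    SignedMeasure.eq_toSignedMeasure_iff_rnDeriv_ae_eq_one hQ]
  simp only [EventuallyEq, Pi.zero_apply, hzero]
end
end

section
/- Let P be a probability measure and φ : ℝ → [0,∞] proper closed convex with φ(1)=0. The divergence functional Q ↦ φ(Q,P) is lower semicontinuous on the space of finite signed measures equipped with the τ-topology (the weak topology induced by all bounded measurable functions), where φ(Q,P) := ∫ φ(dQ/dP) dP if Q ≪ P and +∞ otherwise. -/
open MeasureTheory Filter Topology Set
open scoped ENNReal NNReal Classical

noncomputable section

variable {X : Type*} [MeasurableSpace X]

/-!
Being convex and lower semicontinuous, `φ` is the supremum of its affine minorants (Hahn–Banach in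
`ℝ²`), hence of a dense sequence of them. For `Q ≪ P` with density `f`, choosing at each `x` the
best of the first `n` minorants at `f x` gives bounded measurable `g, b` with `g f - b ↑ φ ∘ f`, so
by monotone convergence `φ(Q,P)` is the supremum of the τ-continuous functionals
`∫ g dQ - ∫ b dP` over bounded measurable fields `(g, b)` of minorants, each of which is at most
`φ(Q,P)`. The set `{Q ≪ P}` is τ-closed because `Q ↦ Q A` is τ-continuous for every `P`-null `A`,
and off it the divergence is `⊤`.
-/

lemma ofReal_integral_le_lintegral_ofReal {α : Type*} [MeasurableSpace α] {μ : Measure α}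
    (f : α → ℝ) : ENNReal.ofReal (∫ x, f x ∂μ) ≤ ∫⁻ x, ENNReal.ofReal (f x) ∂μ := by
  by_cases hf : Integrable f μ
  · exact ENNReal.ofReal_le_of_le_toReal ((integral_eq_lintegral_pos_part_sub_lintegral_neg_part
      hf).le.trans (sub_le_self _ ENNReal.toReal_nonneg))
  · simp [integral_undef hf]

def affineEval (p : ℝ × ℝ) (s : ℝ) : ℝ := p.1 * s - p.2

lemma continuous_affineEval : Continuous fun q : (ℝ × ℝ) × ℝ => affineEval q.1 q.2 := by
  unfold affineEval; fun_prop

lemma Measurable.affineEval {α : Type*} [MeasurableSpace α] {h : α → ℝ × ℝ} {f : α → ℝ}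
    (hh : Measurable h) (hf : Measurable f) : Measurable fun x => affineEval (h x) (f x) :=
  continuous_affineEval.measurable.comp (hh.prodMk hf)

section AffineMinorants

variable {φ : ℝ → ℝ≥0∞}

-- As `φ ≥ 0`, the truncation at `0` by `ENNReal.ofReal` does not change the notion of minorant.
def affineMinorants (φ : ℝ → ℝ≥0∞) : Set (ℝ × ℝ) :=
  {p | ∀ s, ENNReal.ofReal (affineEval p s) ≤ φ s}

lemma zero_mem_affineMinorants (φ : ℝ → ℝ≥0∞) : (0 : ℝ × ℝ) ∈ affineMinorants φ := by
  simp [affineMinorants, affineEval]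

def realEpigraph (φ : ℝ → ℝ≥0∞) : Set (ℝ × ℝ) := {p | φ p.1 ≤ ENNReal.ofReal p.2 ∧ 0 ≤ p.2}

lemma isClosed_realEpigraph (hlsc : LowerSemicontinuous φ) :
    IsClosed (realEpigraph φ) :=
  (hlsc.isClosed_epigraph.preimage
    (continuous_fst.prodMk (ENNReal.continuous_ofReal.comp continuous_snd))).inter
    (isClosed_le continuous_const continuous_snd)

lemma convex_realEpigraph (hconv : ConvexOn ℝ≥0 univ φ) :
    Convex ℝ (realEpigraph φ) := by
  rintro ⟨x₁, t₁⟩ ⟨hx₁, ht₁⟩ ⟨x₂, t₂⟩ ⟨hx₂, ht₂⟩ a b ha hb hab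
  lift a to ℝ≥0 using ha
  lift b to ℝ≥0 using hb
  refine ⟨?_, by simp only [Prod.smul_mk, Prod.mk_add_mk]; positivity⟩
  have hφ := hconv.2 (mem_univ x₁) (mem_univ x₂) zero_le zero_le (mod_cast hab)
  simp only [Prod.smul_mk, Prod.mk_add_mk, NNReal.smul_def, smul_eq_mul] at hφ ⊢
  rw [ENNReal.ofReal_add (by positivity) (by positivity), ENNReal.ofReal_mul a.coe_nonneg,
    ENNReal.ofReal_mul b.coe_nonneg, ENNReal.ofReal_coe_nnreal, ENNReal.ofReal_coe_nnreal]
  calc φ (a * x₁ + b * x₂) ≤ a • φ x₁ + b • φ x₂ := hφ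
    _ ≤ _ := by simp only [ENNReal.smul_def, smul_eq_mul]; gcongr

lemma exists_mem_affineMinorants_lt (hconv : ConvexOn ℝ≥0 univ φ)
    (hlsc : LowerSemicontinuous φ) (hone : φ 1 = 0) {s₀ r : ℝ} (hr : 0 ≤ r)
    (hlt : ENNReal.ofReal r < φ s₀) :
    ∃ p ∈ affineMinorants φ, r < affineEval p s₀ := by
  obtain ⟨f, u, hf₀, hfE⟩ := geometric_hahn_banach_point_closed (convex_realEpigraph hconv)
    (isClosed_realEpigraph hlsc) (x := (s₀, r)) fun h => hlt.not_ge h.1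
  set α := f (1, 0)
  set β := f (0, 1)
  have hf : ∀ s t, f (s, t) = α * s + β * t := fun s t => by
    rw [show (s, t) = s • ((1 : ℝ), (0 : ℝ)) + t • ((0 : ℝ), (1 : ℝ)) by simp, map_add,
      map_smul, map_smul, smul_eq_mul, smul_eq_mul, mul_comm s, mul_comm t]
  have hu : ∀ s, φ s ≠ ⊤ → u < α * s + β * (φ s).toReal := fun s hs => by
    rw [← hf]
    exact hfE _ ⟨(ENNReal.ofReal_toReal hs).ge, ENNReal.toReal_nonneg⟩
  -- `(1, t)` lies in the epigraph for every `t ≥ 0`, so the separating functional cannot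
  -- decrease in `t`.
  have hβ : 0 ≤ β := by
    have h1 : ∀ t, 0 ≤ t → u < α + β * t := fun t ht => by
      have := hfE (1, t) ⟨by simp [hone], ht⟩
      rwa [hf, mul_one] at this
    by_contra! hβ
    have h0 := h1 0 le_rfl
    have := h1 ((α - u) / -β) (div_nonneg (by linarith) (by linarith))
    have hβu : β * ((α - u) / -β) = u - α := by field_simp [hβ.ne]; ring
    linarith
  have hd : β * r < u - α * s₀ := by rw [hf] at hf₀; linarith
  obtain ⟨c, hc, hcβ, hrc⟩ : ∃ c, 0 ≤ c ∧ c * β ≤ 1 ∧ r < c * (u - α * s₀) := by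
    rcases hβ.eq_or_lt with hβ | hβ
    · rw [← hβ] at hd ⊢
      have hd : 0 < u - α * s₀ := by simpa using hd
      exact ⟨(r + 1) / (u - α * s₀), by positivity, by simp, by
        rw [div_mul_cancel₀ _ hd.ne']; linarith⟩
    · exact ⟨1 / β, by positivity, (one_div_mul_cancel hβ.ne').le, by
        rw [one_div_mul_eq_div, lt_div_iff₀ hβ]; linarith⟩
  refine ⟨(-(c * α), -(c * u)), fun s => ?_, by simp only [affineEval]; linarith⟩
  by_cases hs : φ s = ⊤
  · simp [hs]
  refine ENNReal.ofReal_le_of_le_toReal ?_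
  have hus := hu s hs
  simp only [affineEval]
  nlinarith [ENNReal.toReal_nonneg (a := φ s)]

lemma biSup_affineMinorants (hconv : ConvexOn ℝ≥0 univ φ) (hlsc : LowerSemicontinuous φ)
    (hone : φ 1 = 0) (s : ℝ) :
    ⨆ p ∈ affineMinorants φ, ENNReal.ofReal (affineEval p s) = φ s := by
  refine le_antisymm (iSup₂_le fun p hp => hp s) (le_of_forall_lt fun c hc => ?_)
  have hc' : ENNReal.ofReal c.toReal < φ s := by rwa [ENNReal.ofReal_toReal hc.ne_top]
  obtain ⟨p, hp, hlt⟩ :=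
    exists_mem_affineMinorants_lt hconv hlsc hone ENNReal.toReal_nonneg hc'
  calc c = ENNReal.ofReal c.toReal := (ENNReal.ofReal_toReal hc.ne_top).symm
    _ < ENNReal.ofReal (affineEval p s) := by
      rwa [ENNReal.ofReal_lt_ofReal_iff_of_nonneg ENNReal.toReal_nonneg]
    _ ≤ _ := le_iSup₂_of_le p hp le_rfl

/-- A dense sequence in the (separable) set of affine minorants already has supremum `φ`. -/
lemma exists_seq_affineMinorants (hconv : ConvexOn ℝ≥0 univ φ) (hlsc : LowerSemicontinuous φ)
    (hone : φ 1 = 0) :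
    ∃ u : ℕ → ℝ × ℝ, (∀ n, u n ∈ affineMinorants φ) ∧
      ∀ s, ⨆ n, ENNReal.ofReal (affineEval (u n) s) = φ s := by
  have : Nonempty (affineMinorants φ) := ⟨⟨0, zero_mem_affineMinorants φ⟩⟩
  obtain ⟨v, hv⟩ := TopologicalSpace.exists_dense_seq (affineMinorants φ)
  refine ⟨fun n => v n, fun n => (v n).2, fun s => le_antisymm (iSup_le fun n => (v n).2 s) ?_⟩
  rw [← biSup_affineMinorants hconv hlsc hone s]
  refine iSup₂_le fun p hp => le_of_forall_lt fun c hc => ?_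
  have hopen : IsOpen {q : affineMinorants φ | c < ENNReal.ofReal (affineEval q s)} :=
    isOpen_lt continuous_const (ENNReal.continuous_ofReal.comp
      (continuous_affineEval.comp (continuous_subtype_val.prodMk continuous_const)))
  obtain ⟨n, hn⟩ := hv.exists_mem_open hopen ⟨⟨p, hp⟩, hc⟩
  exact hn.trans_le (le_iSup (fun n => ENNReal.ofReal (affineEval (v n) s)) n)

end AffineMinorants

section RunningArgmax

variable {α : Type*} (u : ℕ → ℝ × ℝ) (f : α → ℝ)

/-- At `x`, the pair among `0, u 0, …, u (n - 1)` whose affine function is largest at `f x`. -/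
def runningArgmax : ℕ → α → ℝ × ℝ
  | 0 => fun _ => 0
  | n + 1 => fun x =>
      if affineEval (runningArgmax n x) (f x) < affineEval (u n) (f x) then u n
      else runningArgmax n x

variable {u f}

lemma affineEval_runningArgmax_succ (n : ℕ) (x : α) :
    affineEval (runningArgmax u f (n + 1) x) (f x) =
      max (affineEval (runningArgmax u f n x) (f x)) (affineEval (u n) (f x)) := by
  simp only [runningArgmax]
  split_ifs with h
  · exact (max_eq_right h.le).symm
  · exact (max_eq_left (not_lt.1 h)).symm

lemma monotone_affineEval_runningArgmax (x : α) :
    Monotone fun n => affineEval (runningArgmax u f n x) (f x) :=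
  monotone_nat_of_le_succ fun n => by
    simp only [affineEval_runningArgmax_succ]; exact le_max_left _ _

lemma affineEval_runningArgmax_nonneg (n : ℕ) (x : α) :
    0 ≤ affineEval (runningArgmax u f n x) (f x) := by
  simpa [runningArgmax, affineEval] using
    monotone_affineEval_runningArgmax (u := u) x (Nat.zero_le n)

lemma runningArgmax_mem_affineMinorants {φ : ℝ → ℝ≥0∞} (hu : ∀ n, u n ∈ affineMinorants φ)
    (n : ℕ) (x : α) : runningArgmax u f n x ∈ affineMinorants φ := by
  induction n with
  | zero => exact zero_mem_affineMinorants φ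
  | succ n ih =>
    simp only [runningArgmax]
    split_ifs
    exacts [hu n, ih]

lemma norm_runningArgmax_le (n : ℕ) (x : α) :
    ‖runningArgmax u f n x‖ ≤ ∑ i ∈ Finset.range n, ‖u i‖ := by
  induction n with
  | zero => simp [runningArgmax]
  | succ n ih =>
    rw [Finset.sum_range_succ]
    simp only [runningArgmax]
    split_ifs
    · exact le_add_of_nonneg_left (Finset.sum_nonneg fun i _ => norm_nonneg _)
    · exact le_add_of_le_of_nonneg ih (norm_nonneg _)

lemma measurable_runningArgmax [MeasurableSpace α] (hf : Measurable f) (n : ℕ) :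
    Measurable (runningArgmax u f n) := by
  induction n with
  | zero => exact measurable_const
  | succ n ih =>
    exact Measurable.ite (measurableSet_lt (ih.affineEval hf) (measurable_const.affineEval hf))
      measurable_const ih

lemma iSup_affineEval_runningArgmax {φ : ℝ → ℝ≥0∞} (hu : ∀ n, u n ∈ affineMinorants φ)
    (hφ : ∀ s, ⨆ n, ENNReal.ofReal (affineEval (u n) s) = φ s) (x : α) :
    ⨆ n, ENNReal.ofReal (affineEval (runningArgmax u f n x) (f x)) = φ (f x) := by
  refine le_antisymm (iSup_le fun n => runningArgmax_mem_affineMinorants hu n x (f x)) ?_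
  rw [← hφ]
  refine iSup_le fun n => le_iSup_of_le (n + 1) (ENNReal.ofReal_le_ofReal ?_)
  rw [affineEval_runningArgmax_succ]
  exact le_max_right _ _

end RunningArgmax

section SignedMeasure

variable {P : Measure X} {Q : SignedMeasure X}

lemma posPart_negPart_absolutelyContinuous (hQ : Q ≪ᵥ P.toENNRealVectorMeasure) :
    Q.toJordanDecomposition.posPart ≪ P ∧ Q.toJordanDecomposition.negPart ≪ P := by
  rwa [SignedMeasure.absolutelyContinuous_ennreal_iff,
    VectorMeasure.ennrealToMeasure_toENNRealVectorMeasure,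
    SignedMeasure.totalVariation_absolutelyContinuous_iff] at hQ

lemma sint_eq_integral_mul_rnDeriv [SigmaFinite P] (hQ : Q ≪ᵥ P.toENNRealVectorMeasure)
    {g : X → ℝ} (hg : Measurable g) {C : ℝ} (hC : ∀ x, ‖g x‖ ≤ C) :
    sint Q g = ∫ x, g x * Q.rnDeriv P x ∂P := by
  obtain ⟨hpos, hneg⟩ := posPart_negPart_absolutelyContinuous hQ
  have hint : ∀ (μ : Measure X) [IsFiniteMeasure μ], Integrable g μ := fun μ _ =>
    .of_bound hg.aestronglyMeasurable C (ae_of_all _ hC)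
  rw [sint, ← integral_rnDeriv_smul hpos, ← integral_rnDeriv_smul hneg,
    ← integral_sub ((integrable_rnDeriv_smul_iff hpos).2 (hint _))
      ((integrable_rnDeriv_smul_iff hneg).2 (hint _))]
  congr 1 with x
  simp only [SignedMeasure.rnDeriv_def, smul_eq_mul]
  ring

lemma sint_indicator_one {A : Set X} (hA : MeasurableSet A) : sint Q (A.indicator 1) = Q A := by
  conv_rhs => rw [← Q.toSignedMeasure_toJordanDecomposition]
  rw [sint, integral_indicator_one hA, integral_indicator_one hA,
    JordanDecomposition.toSignedMeasure, sub_apply, Measure.toSignedMeasure_apply_measurable hA,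
    Measure.toSignedMeasure_apply_measurable hA]

end SignedMeasure

lemma continuous_sint {g : X → ℝ} (hg : Measurable g) {C : ℝ} (hC : ∀ x, ‖g x‖ ≤ C) :
    Continuous[tauTop ∅, _] fun Q => sint Q g := by
  rw [continuous_iff_le_induced, tauTop]
  exact iInf₂_le g (Or.inl ⟨hg, C, hC⟩)

lemma continuous_apply_of_measurableSet {A : Set X} (hA : MeasurableSet A) :
    Continuous[tauTop ∅, _] fun Q : SignedMeasure X => Q A := by
  simp_rw [← sint_indicator_one hA]
  refine continuous_sint (measurable_one.indicator hA) (C := 1) fun x => ?_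
  by_cases hx : x ∈ A <;> simp [hx]

lemma isClosed_setOf_absolutelyContinuous (P : Measure X) :
    IsClosed[tauTop ∅] {Q : SignedMeasure X | Q ≪ᵥ P.toENNRealVectorMeasure} := by
  have hset : {Q : SignedMeasure X | Q ≪ᵥ P.toENNRealVectorMeasure} =
      ⋂ A ∈ {A | MeasurableSet A ∧ P A = 0}, {Q | Q A = 0} := by
    ext Q
    simp only [mem_ofPred_eq, mem_iInter]
    refine ⟨fun hQ A ⟨hA, hPA⟩ => hQ ?_, fun h => VectorMeasure.AbsolutelyContinuous.mk
      fun A hA hPA => h A ⟨hA, ?_⟩⟩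
    · rwa [Measure.toENNRealVectorMeasure_apply_measurable hA]
    · rwa [Measure.toENNRealVectorMeasure_apply_measurable hA] at hPA
  let : TopologicalSpace (SignedMeasure X) := tauTop ∅
  rw [hset]
  exact isClosed_biInter fun A hA =>
    isClosed_eq (continuous_apply_of_measurableSet hA.1) continuous_const

section DualRepresentation

variable {φ : ℝ → ℝ≥0∞} {P : Measure X} {Q : SignedMeasure X} {h : X → ℝ × ℝ}

def boundedMinorantFields (φ : ℝ → ℝ≥0∞) : Set (X → ℝ × ℝ) :=
  {h | Measurable h ∧ (∃ C, ∀ x, ‖h x‖ ≤ C) ∧ ∀ x, h x ∈ affineMinorants φ}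

def dualObjective (P : Measure X) (h : X → ℝ × ℝ) (Q : SignedMeasure X) : ℝ :=
  sint Q (fun x => (h x).1) - ∫ x, (h x).2 ∂P

lemma continuous_dualObjective (hh : h ∈ boundedMinorantFields φ) :
    Continuous[tauTop ∅, _] (dualObjective P h) := by
  obtain ⟨hm, ⟨C, hC⟩, -⟩ := hh
  let : TopologicalSpace (SignedMeasure X) := tauTop ∅
  exact (continuous_sint hm.fst fun x => (norm_fst_le _).trans (hC x)).sub continuous_const

lemma integrable_fst_mul_rnDeriv (hm : Measurable h) {C : ℝ} (hC : ∀ x, ‖h x‖ ≤ C) :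
    Integrable (fun x => (h x).1 * Q.rnDeriv P x) P :=
  (SignedMeasure.integrable_rnDeriv Q P).bdd_mul hm.fst.aestronglyMeasurable
    (ae_of_all _ fun x => (norm_fst_le _).trans (hC x))

section
variable [IsFiniteMeasure P]

lemma integrable_snd_of_norm_le (hm : Measurable h) {C : ℝ} (hC : ∀ x, ‖h x‖ ≤ C) :
    Integrable (fun x => (h x).2) P :=
  .of_bound hm.snd.aestronglyMeasurable C (ae_of_all _ fun x => (norm_snd_le _).trans (hC x))

lemma dualObjective_eq_integral (hQ : Q ≪ᵥ P.toENNRealVectorMeasure) (hm : Measurable h)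
    {C : ℝ} (hC : ∀ x, ‖h x‖ ≤ C) :
    dualObjective P h Q = ∫ x, affineEval (h x) (Q.rnDeriv P x) ∂P := by
  rw [dualObjective, sint_eq_integral_mul_rnDeriv hQ hm.fst fun x => (norm_fst_le _).trans (hC x),
    ← integral_sub (integrable_fst_mul_rnDeriv hm hC) (integrable_snd_of_norm_le hm hC)]
  rfl

lemma ofReal_dualObjective_le_div (hQ : Q ≪ᵥ P.toENNRealVectorMeasure)
    (hh : h ∈ boundedMinorantFields φ) : ENNReal.ofReal (dualObjective P h Q) ≤ div φ Q P := by
  obtain ⟨hm, ⟨C, hC⟩, hmin⟩ := hh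
  rw [dualObjective_eq_integral hQ hm hC]
  exact (ofReal_integral_le_lintegral_ofReal _).trans (lintegral_mono fun x => hmin x _)

lemma div_le_iSup_ofReal_dualObjective (hconv : ConvexOn ℝ≥0 univ φ)
    (hlsc : LowerSemicontinuous φ) (hone : φ 1 = 0) (hQ : Q ≪ᵥ P.toENNRealVectorMeasure) :
    div φ Q P ≤ ⨆ h ∈ boundedMinorantFields φ, ENNReal.ofReal (dualObjective P h Q) := by
  obtain ⟨u, hu, hφ⟩ := exists_seq_affineMinorants hconv hlsc hone
  set F := Q.rnDeriv P
  have hF : Measurable F := SignedMeasure.measurable_rnDeriv Q P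
  have hmem : ∀ n, runningArgmax u F n ∈ boundedMinorantFields φ := fun n =>
    ⟨measurable_runningArgmax hF n, ⟨_, norm_runningArgmax_le n⟩,
      runningArgmax_mem_affineMinorants hu n⟩
  calc div φ Q P = ∫⁻ x, ⨆ n, ENNReal.ofReal (affineEval (runningArgmax u F n x) (F x)) ∂P := by
        simp_rw [iSup_affineEval_runningArgmax hu hφ]; rfl
    _ = ⨆ n, ∫⁻ x, ENNReal.ofReal (affineEval (runningArgmax u F n x) (F x)) ∂P :=
        lintegral_iSup (fun n => ((measurable_runningArgmax hF n).affineEval hF).ennreal_ofReal)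
          fun m n hmn x => ENNReal.ofReal_le_ofReal (monotone_affineEval_runningArgmax x hmn)
    _ = ⨆ n, ENNReal.ofReal (dualObjective P (runningArgmax u F n) Q) := by
        refine iSup_congr fun n => ?_
        have hint : Integrable (fun x => affineEval (runningArgmax u F n x) (F x)) P :=
          (integrable_fst_mul_rnDeriv (hmem n).1 (norm_runningArgmax_le n)).sub
            (integrable_snd_of_norm_le (hmem n).1 (norm_runningArgmax_le n))
        rw [dualObjective_eq_integral hQ (hmem n).1 (norm_runningArgmax_le n),
          ofReal_integral_eq_lintegral_ofReal hint
            (ae_of_all _ (affineEval_runningArgmax_nonneg n))]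
    _ ≤ _ := iSup_le fun n => le_iSup₂_of_le _ (hmem n) le_rfl

lemma divext_eq_iSup_sup_indicator (hconv : ConvexOn ℝ≥0 univ φ)
    (hlsc : LowerSemicontinuous φ) (hone : φ 1 = 0) (Q : SignedMeasure X) :
    divext φ Q P = (⨆ h ∈ boundedMinorantFields φ, ENNReal.ofReal (dualObjective P h Q)) ⊔
      {Q : SignedMeasure X | Q ≪ᵥ P.toENNRealVectorMeasure}ᶜ.indicator ⊤ Q := by
  by_cases hQ : Q ≪ᵥ P.toENNRealVectorMeasure
  · rw [divext, if_pos hQ, indicator_of_notMem (by simpa), max_eq_left zero_le]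
    exact le_antisymm (div_le_iSup_ofReal_dualObjective hconv hlsc hone hQ)
      (iSup₂_le fun h hh => ofReal_dualObjective_le_div hQ hh)
  · rw [divext, if_neg hQ, indicator_of_mem hQ]
    simp

end

end DualRepresentation

/-- The divergence functional `Q ↦ φ(Q,P)` (equal to `∫ φ(dQ/dP) dP` if
`Q ≪ P` and `+∞` otherwise) is lower semicontinuous on the space of finite signed measures
equipped with the τ-topology induced by the bounded measurable functions. -/
theorem stmt7 (P : Measure X) [IsProbabilityMeasure P]
    (φ : ℝ → ℝ≥0∞)
    (hconv : ConvexOn ℝ≥0 Set.univ φ)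
    (hlsc : LowerSemicontinuous φ)
    (hone : φ 1 = 0) :
    @LowerSemicontinuous _ ℝ≥0∞ (tauTop (X := X) ∅) _ (fun Q => divext φ Q P) := by
  let : TopologicalSpace (SignedMeasure X) := tauTop ∅
  simp_rw [divext_eq_iSup_sup_indicator hconv hlsc hone]
  exact (lowerSemicontinuous_biSup fun h hh =>
    (ENNReal.continuous_ofReal.comp (continuous_dualObjective hh)).lowerSemicontinuous).sup
    ((isClosed_setOf_absolutelyContinuous P).isOpen_compl.lowerSemicontinuous_indicator le_top)
end
end

section
/- Let φ be a convex function satisfying: there exists 0<δ<1 such that for all c ∈ [1−δ,1+δ] there are constants c₁,c₂,c₃ with φ(c x) ≤ c₁ φ(x) + c₂|x| + c₃ for all x. Then for every finite signed measure Q ≪ P with φ(Q,P) = ∫ φ(dQ/dP) dP < ∞: (1) for each c ∈ [1−δ,1+δ], φ(c·dQ/dP) ∈ L¹(P); and (2) lim_{c→1} φ(cQ,P) = φ(Q,P). -/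
open MeasureTheory Filter Topology Set
open scoped ENNReal NNReal Classical

noncomputable section

variable {X : Type*} [MeasurableSpace X]

/-! For fixed `x`, `c ↦ φ (c * x)` is convex. On `[1 - δ, 1 + δ]` it is therefore bounded by
`φ ((1 - δ) * x) + φ ((1 + δ) * x)`, which by part (1) at the two endpoints is an integrable
dominating function, and near `c = 1` it lies below the chord
`φ x + (|c - 1| / δ) * (φ ((1 - δ) * x) + φ ((1 + δ) * x))`; with lower semicontinuity this gives
`φ (c * x) → φ x` wherever the endpoint values are finite, i.e. `P`-a.e. Part (2) then follows by
dominated convergence, and part (1) is the growth condition integrated against `P`. -/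

namespace ConvexOn

variable {φ : ℝ → ℝ≥0∞}

theorem le_add_ofReal_mul (hφ : ConvexOn ℝ≥0 univ φ) (p q : ℝ) {s : ℝ} (hs₀ : 0 ≤ s)
    (hs₁ : s ≤ 1) : φ ((1 - s) * p + s * q) ≤ φ p + ENNReal.ofReal s * φ q := by
  have hsum : (1 - s).toNNReal + s.toNNReal = 1 := by
    rw [← Real.toNNReal_add (by linarith) hs₀]
    simp
  have h := hφ.2 (mem_univ p) (mem_univ q) bot_le bot_le hsum
  simp only [NNReal.smul_def, Real.coe_toNNReal _ hs₀, Real.coe_toNNReal _ (sub_nonneg.2 hs₁),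
    smul_eq_mul] at h
  refine h.trans (add_le_add_left ?_ _)
  calc (1 - s).toNNReal • φ p = ((1 - s).toNNReal : ℝ≥0∞) * φ p := rfl
    _ ≤ 1 * φ p := by gcongr; exact_mod_cast Real.toNNReal_le_one.2 (by linarith)
    _ = φ p := one_mul _

theorem apply_mul_le_add (hφ : ConvexOn ℝ≥0 univ φ) {a b c : ℝ} (hac : a ≤ c) (hcb : c ≤ b)
    (x : ℝ) : φ (c * x) ≤ φ (a * x) + φ (b * x) := by
  rcases hac.eq_or_lt with rfl | hac
  · exact le_self_add
  set s := (c - a) / (b - a)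
  have hs₁ : s ≤ 1 := (div_le_one (by linarith)).2 (by linarith)
  have hba : b - a ≠ 0 := (sub_pos.2 (hac.trans_le hcb)).ne'
  have hcx : c * x = (1 - s) * (a * x) + s * (b * x) := by
    simp only [s]; field_simp; ring
  calc φ (c * x) ≤ φ (a * x) + ENNReal.ofReal s * φ (b * x) :=
        hcx ▸ hφ.le_add_ofReal_mul _ _ (div_nonneg (by linarith) (by linarith)) hs₁
    _ ≤ φ (a * x) + φ (b * x) := by
        gcongr; exact (mul_le_of_le_one_left' (ENNReal.ofReal_le_one.2 hs₁))

theorem apply_mul_le_apply_add_ofReal_mul (hφ : ConvexOn ℝ≥0 univ φ) {δ : ℝ} (hδ : 0 < δ)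
    {c : ℝ} (hc : c ∈ Icc (1 - δ) (1 + δ)) (x : ℝ) :
    φ (c * x) ≤ φ x + ENNReal.ofReal (|c - 1| / δ) * (φ ((1 - δ) * x) + φ ((1 + δ) * x)) := by
  set s := |c - 1| / δ with hs
  have hs₁ : s ≤ 1 := (div_le_one hδ).2 (abs_le.2 ⟨by linarith [hc.1], by linarith [hc.2]⟩)
  have key : ∀ d : ℝ, c = 1 + s * d →
      φ (c * x) ≤ φ x + ENNReal.ofReal s * φ ((1 + d) * x) := fun d hd => by
    have hcx : c * x = (1 - s) * x + s * ((1 + d) * x) := by rw [hd]; ring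
    exact hcx ▸ hφ.le_add_ofReal_mul _ _ (by positivity) hs₁
  rcases le_total c 1 with hc1 | hc1
  · refine (key (-δ) ?_).trans (by rw [← sub_eq_add_neg]; gcongr; exact le_self_add)
    rw [hs, abs_of_nonpos (by linarith)]; field_simp; ring
  · refine (key δ ?_).trans (by gcongr; exact le_add_self)
    rw [hs, abs_of_nonneg (by linarith)]; field_simp; ring

theorem tendsto_apply_mul_nhds_one (hφ : ConvexOn ℝ≥0 univ φ) (hlsc : LowerSemicontinuous φ)
    {δ : ℝ} (hδ : 0 < δ) {x : ℝ} (hlo : φ ((1 - δ) * x) ≠ ⊤) (hhi : φ ((1 + δ) * x) ≠ ⊤) :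
    Tendsto (fun c => φ (c * x)) (𝓝 1) (𝓝 (φ x)) := by
  have hmul : Tendsto (fun c : ℝ => c * x) (𝓝 1) (𝓝 x) := by
    simpa using (continuous_mul_const x).tendsto 1
  have hupper : Tendsto (fun c : ℝ => φ x + ENNReal.ofReal (|c - 1| / δ) *
      (φ ((1 - δ) * x) + φ ((1 + δ) * x))) (𝓝 1) (𝓝 (φ x)) := by
    have hs : Tendsto (fun c : ℝ => ENNReal.ofReal (|c - 1| / δ)) (𝓝 1) (𝓝 0) := by
      have : Continuous fun c : ℝ => ENNReal.ofReal (|c - 1| / δ) :=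
        ENNReal.continuous_ofReal.comp (by fun_prop)
      simpa using this.tendsto 1
    simpa using (ENNReal.Tendsto.mul_const hs (.inr (ENNReal.add_ne_top.2 ⟨hlo, hhi⟩))).const_add
      (φ x)
  have hnear : ∀ᶠ c in 𝓝 (1 : ℝ), c ∈ Icc (1 - δ) (1 + δ) :=
    Icc_mem_nhds (by linarith) (by linarith)
  refine tendsto_order.2 ⟨fun y hy => hmul.eventually (hlsc x y hy), fun y hy => ?_⟩
  filter_upwards [hupper.eventually (gt_mem_nhds hy), hnear] with c hc hcδ
  exact (hφ.apply_mul_le_apply_add_ofReal_mul hδ hcδ x).trans_lt hc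

end ConvexOn

theorem lintegral_ne_top_of_le_affine {μ : Measure X} [IsFiniteMeasure μ] {f : X → ℝ}
    (hf : Integrable f μ) {F G : X → ℝ≥0∞} (hF : AEMeasurable F μ) (hFi : ∫⁻ x, F x ∂μ ≠ ⊤)
    (c₁ c₂ c₃ : ℝ≥0) (hG : ∀ x, G x ≤ c₁ * F x + c₂ * ENNReal.ofReal |f x| + c₃) :
    ∫⁻ x, G x ∂μ ≠ ⊤ := by
  have hfi : ∫⁻ x, ENNReal.ofReal |f x| ∂μ ≠ ⊤ := by
    simpa [Real.norm_eq_abs] using (hasFiniteIntegral_iff_norm f).1 hf.2 |>.ne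
  refine ne_top_of_le_ne_top ?_ (lintegral_mono hG)
  rw [lintegral_add_right' _ aemeasurable_const, lintegral_add_left' (hF.const_mul _),
    lintegral_const_mul'' _ hF, lintegral_const_mul'' _ hf.1.aemeasurable.abs.ennreal_ofReal,
    lintegral_const]
  finiteness

theorem stmt12_general (P : Measure X) [IsProbabilityMeasure P]
    (φ : ℝ → ℝ≥0∞)
    (hconv : ConvexOn ℝ≥0 Set.univ φ)
    (hlsc : LowerSemicontinuous φ)
    (δ : ℝ) (hδ : δ ∈ Ioo (0 : ℝ) 1)
    (hgrow : ∀ c ∈ Icc (1 - δ) (1 + δ), ∃ c₁ c₂ c₃ : ℝ≥0, ∀ x : ℝ,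
      φ (c * x) ≤ (c₁ : ℝ≥0∞) * φ x + (c₂ : ℝ≥0∞) * ENNReal.ofReal |x| + (c₃ : ℝ≥0∞)) :
    ∀ Q : SignedMeasure X, Q ≪ᵥ P.toENNRealVectorMeasure → div φ Q P ≠ ⊤ →
      (∀ c ∈ Icc (1 - δ) (1 + δ), ∫⁻ x, φ (c * Q.rnDeriv P x) ∂P ≠ ⊤) ∧
      Tendsto (fun c : ℝ => ∫⁻ x, φ (c * Q.rnDeriv P x) ∂P) (𝓝 1) (𝓝 (div φ Q P)) := by
  intro Q _ hfin
  obtain ⟨hδ₀, -⟩ := hδ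
  set f := Q.rnDeriv P
  have hφf : ∀ c : ℝ, Measurable fun x => φ (c * f x) := fun c =>
    hlsc.measurable.comp ((SignedMeasure.measurable_rnDeriv Q P).const_mul c)
  have part1 : ∀ c ∈ Icc (1 - δ) (1 + δ), ∫⁻ x, φ (c * f x) ∂P ≠ ⊤ := fun c hc => by
    obtain ⟨c₁, c₂, c₃, h⟩ := hgrow c hc
    exact lintegral_ne_top_of_le_affine (SignedMeasure.integrable_rnDeriv Q P)
      (by simpa using (hφf 1).aemeasurable) hfin c₁ c₂ c₃ fun x => h (f x)
  refine ⟨part1, ?_⟩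
  have hlo : (1 - δ) ∈ Icc (1 - δ) (1 + δ) := ⟨le_rfl, by linarith ⟩
  have hhi : (1 + δ) ∈ Icc (1 - δ) (1 + δ) := ⟨by linarith, le_rfl⟩
  have hlim : ∀ᵐ x ∂P, Tendsto (fun c => φ (c * f x)) (𝓝 1) (𝓝 (φ (f x))) := by
    filter_upwards [ae_lt_top (hφf _) (part1 _ hlo), ae_lt_top (hφf _) (part1 _ hhi)]
      with x hxlo hxhi
    exact hconv.tendsto_apply_mul_nhds_one hlsc hδ₀ hxlo.ne hxhi.ne
  refine tendsto_lintegral_filter_of_dominated_convergence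
    (fun x => φ ((1 - δ) * f x) + φ ((1 + δ) * f x)) (.of_forall hφf) ?_ ?_ hlim
  · have hnear : Icc (1 - δ) (1 + δ) ∈ 𝓝 (1 : ℝ) :=
      Icc_mem_nhds (by linarith) (by linarith)
    filter_upwards [hnear] with c hc
    exact .of_forall fun x => hconv.apply_mul_le_add hc.1 hc.2 (f x)
  · rw [lintegral_add_left (hφf _)]
    exact ENNReal.add_ne_top.2 ⟨part1 _ hlo, part1 _ hhi⟩

/-- Let `φ` be convex with `φ 1 = 0` satisfying the scaling growth condition:
there is `0<δ<1` such that for all `c ∈ [1−δ,1+δ]` there are constants `c₁,c₂,c₃` with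
`φ(c x) ≤ c₁ φ(x) + c₂|x| + c₃` for all `x`.  Then for every finite signed measure `Q ≪ P`
with `φ(Q,P) < ∞`: (1) for each `c ∈ [1−δ,1+δ]`, `φ(c·dQ/dP) ∈ L¹(P)`; and
(2) `lim_{c→1} φ(cQ,P) = φ(Q,P)`. -/
theorem stmt12 (P : Measure X) [IsProbabilityMeasure P]
    (φ : ℝ → ℝ≥0∞)
    (hconv : ConvexOn ℝ≥0 Set.univ φ)
    (hlsc : LowerSemicontinuous φ)
    (hone : φ 1 = 0)
    (δ : ℝ) (hδ : δ ∈ Ioo (0 : ℝ) 1)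
    (hgrow : ∀ c ∈ Icc (1 - δ) (1 + δ), ∃ c₁ c₂ c₃ : ℝ≥0, ∀ x : ℝ,
      φ (c * x) ≤ (c₁ : ℝ≥0∞) * φ x + (c₂ : ℝ≥0∞) * ENNReal.ofReal |x| + (c₃ : ℝ≥0∞)) :
    ∀ Q : SignedMeasure X, Q ≪ᵥ P.toENNRealVectorMeasure → div φ Q P ≠ ⊤ →
      (∀ c ∈ Icc (1 - δ) (1 + δ), ∫⁻ x, φ (c * Q.rnDeriv P x) ∂P ≠ ⊤) ∧
      Tendsto (fun c : ℝ => ∫⁻ x, φ (c * Q.rnDeriv P x) ∂P) (𝓝 1) (𝓝 (div φ Q P)) :=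
  stmt12_general P φ hconv hlsc δ hδ hgrow
end
end

section
/- Let φ be differentiable convex satisfying the growth condition: ∃ 0<δ<1 such that ∀ c∈[1−δ,1+δ] ∃ c₁,c₂,c₃ with φ(cx) ≤ c₁φ(x)+c₂|x|+c₃ for all x. Then for every Q ≪ P with φ(Q,P) < ∞, the function q·φ'(q) belongs to L¹(X,P), where q = dQ/dP. -/
open MeasureTheory Filter Topology Set
open scoped ENNReal NNReal Classical

noncomputable section

variable {X : Type*} [MeasurableSpace X]

/- If `φ'` is the derivative of the convex function `f = φ.toReal` on `S = {φ < ⊤}`, comparing it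
with the chords of `f` from `y` to `(1 ± δ) y` gives `δ |y φ'(y)| ≤ f((1 + δ) y) + f((1 - δ) y)`.
The growth condition bounds both terms by `f(y)`, `|y|` and constants, all integrable along
`q = dQ/dP` when `φ(Q, P) < ∞`; measurability of `φ' ∘ q` comes from the monotonicity of `φ'`. -/

theorem convexOn_toReal_of_convexOn_nnreal {φ : ℝ → ℝ≥0∞} (hφ : ConvexOn ℝ≥0 univ φ) :
    ConvexOn ℝ {y | φ y ≠ ⊤} (fun y => (φ y).toReal) := by
  have key : ∀ x y : ℝ, ∀ a b : ℝ≥0, a + b = 1 →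
      φ (a * x + b * y) ≤ a * φ x + b * φ y := fun x y a b hab =>
    hφ.2 (mem_univ x) (mem_univ y) a.2 b.2 hab
  have hdom : Convex ℝ {y | φ y ≠ ⊤} := by
    intro x hx y hy a b ha hb hab
    lift a to ℝ≥0 using ha
    lift b to ℝ≥0 using hb
    exact ne_top_of_le_ne_top (by finiteness) (key x y a b (by exact_mod_cast hab))
  refine ⟨hdom, fun x hx y hy a b ha hb hab => ?_⟩
  lift a to ℝ≥0 using ha
  lift b to ℝ≥0 using hb
  have := ENNReal.toReal_mono (by finiteness) (key x y a b (by exact_mod_cast hab))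
  rw [ENNReal.toReal_add (ENNReal.mul_ne_top ENNReal.coe_ne_top hx)
    (ENNReal.mul_ne_top ENNReal.coe_ne_top hy)] at this
  simpa using this

theorem ENNReal.toReal_le_of_le_affine {u v : ℝ≥0∞} {a b c : ℝ≥0} {t : ℝ} (ht : 0 ≤ t)
    (hv : v ≠ ⊤) (h : u ≤ a * v + b * ENNReal.ofReal t + c) :
    u.toReal ≤ a * v.toReal + b * t + c := by
  have := ENNReal.toReal_mono (by finiteness) h
  rwa [ENNReal.toReal_add (by finiteness) (by finiteness), ENNReal.toReal_add (by finiteness)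
    (by finiteness), ENNReal.toReal_mul, ENNReal.toReal_mul, ENNReal.toReal_ofReal ht] at this

namespace ConvexOn

variable {S : Set ℝ} {f f' : ℝ → ℝ}

theorem monotoneOn_of_hasDerivWithinAt (hf : ConvexOn ℝ S f)
    (hd : ∀ x ∈ S, HasDerivWithinAt f (f' x) S x) : MonotoneOn f' S := by
  intro x hx y hy hxy
  rcases eq_or_lt_of_le hxy with rfl | hlt
  · rfl
  exact (hf.le_slope_of_hasDerivWithinAt hx hy hlt (hd x hx)).trans
    (hf.slope_le_of_hasDerivWithinAt hx hy hlt (hd y hy))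

theorem sub_le_deriv_mul_le {y t d : ℝ} (hf : ConvexOn ℝ S f) (hy : y ∈ S)
    (hd : HasDerivWithinAt f d S y) (ht : 0 ≤ t) (hl : y - t ∈ S) (hr : y + t ∈ S) :
    f y - f (y - t) ≤ d * t ∧ d * t ≤ f (y + t) - f y := by
  rcases ht.eq_or_lt with rfl | ht
  · simp
  have hleft := hf.slope_le_of_hasDerivWithinAt hl hy (by linarith) hd
  have hright := hf.le_slope_of_hasDerivWithinAt hy hr (by linarith) hd
  rw [slope_def_field, sub_sub_cancel, div_le_iff₀ ht] at hleft
  rw [slope_def_field, add_sub_cancel_left, le_div_iff₀ ht] at hright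
  exact ⟨hleft, hright⟩

theorem mul_abs_mul_deriv_le {y d δ : ℝ} (hf : ConvexOn ℝ S f) (hf0 : ∀ z, 0 ≤ f z)
    (hy : y ∈ S) (hd : HasDerivWithinAt f d S y) (hδ : 0 ≤ δ)
    (hplus : (1 + δ) * y ∈ S) (hminus : (1 - δ) * y ∈ S) :
    δ * |y * d| ≤ f ((1 + δ) * y) + f ((1 - δ) * y) := by
  have hchords : (y - δ * |y| = (1 - δ) * y ∧ y + δ * |y| = (1 + δ) * y) ∨
      (y - δ * |y| = (1 + δ) * y ∧ y + δ * |y| = (1 - δ) * y) := by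
    rcases abs_cases y with ⟨h, -⟩ | ⟨h, -⟩
    · exact .inl ⟨by rw [h]; ring, by rw [h]; ring⟩
    · exact .inr ⟨by rw [h]; ring, by rw [h]; ring⟩
  have hδy : δ * |y * d| = |d * (δ * |y|)| := by
    rw [abs_mul, abs_mul, abs_mul, abs_abs, abs_of_nonneg hδ]; ring
  rw [hδy, abs_le]
  rcases hchords with ⟨hl, hr⟩ | ⟨hl, hr⟩
  · obtain ⟨h₁, h₂⟩ := hf.sub_le_deriv_mul_le hy hd (by positivity) (hl ▸ hminus) (hr ▸ hplus)
    rw [hl] at h₁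
    rw [hr] at h₂
    constructor <;> linarith [hf0 y, hf0 ((1 + δ) * y), hf0 ((1 - δ) * y)]
  · obtain ⟨h₁, h₂⟩ := hf.sub_le_deriv_mul_le hy hd (by positivity) (hl ▸ hplus) (hr ▸ hminus)
    rw [hl] at h₁
    rw [hr] at h₂
    constructor <;> linarith [hf0 y, hf0 ((1 + δ) * y), hf0 ((1 - δ) * y)]

end ConvexOn

theorem aemeasurable_comp_of_monotoneOn {Ω : Type*} [MeasurableSpace Ω] {μ : Measure Ω}
    {S : Set ℝ} {g : ℝ → ℝ} {q : Ω → ℝ} (hS : MeasurableSet S) (hg : MonotoneOn g S)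
    (hq : Measurable q) (hqS : ∀ᵐ x ∂μ, q x ∈ S) : AEMeasurable (g ∘ q) μ := by
  have hg' : AEMeasurable g ((μ.map q).restrict S) := aemeasurable_restrict_of_monotoneOn hS hg
  rw [Measure.restrict_eq_self_of_ae_mem ((ae_map_iff hq.aemeasurable hS).2 hqS)] at hg'
  exact hg'.comp_measurable hq

theorem mul_abs_mul_deriv_le_of_growth {φ : ℝ → ℝ≥0∞} {φ' : ℝ → ℝ}
    (hconv : ConvexOn ℝ≥0 univ φ)
    (hderiv : ∀ x ∈ {y : ℝ | φ y ≠ ⊤},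
      HasDerivWithinAt (fun y => (φ y).toReal) (φ' x) {y : ℝ | φ y ≠ ⊤} x)
    {δ : ℝ} (hδ : 0 ≤ δ) {c₁ c₂ c₃ d₁ d₂ d₃ : ℝ≥0}
    (hplus : ∀ x, φ ((1 + δ) * x) ≤ c₁ * φ x + c₂ * ENNReal.ofReal |x| + c₃)
    (hminus : ∀ x, φ ((1 - δ) * x) ≤ d₁ * φ x + d₂ * ENNReal.ofReal |x| + d₃)
    {y : ℝ} (hy : φ y ≠ ⊤) :
    δ * |y * φ' y| ≤ (c₁ + d₁ : ℝ) * (φ y).toReal + (c₂ + d₂ : ℝ) * |y| + (c₃ + d₃ : ℝ) := by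
  have hbound := (convexOn_toReal_of_convexOn_nnreal hconv).mul_abs_mul_deriv_le
    (fun _ => ENNReal.toReal_nonneg) hy (hderiv y hy) hδ
    (ne_top_of_le_ne_top (by finiteness) (hplus y))
    (ne_top_of_le_ne_top (by finiteness) (hminus y))
  linarith [ENNReal.toReal_le_of_le_affine (abs_nonneg y) hy (hplus y),
    ENNReal.toReal_le_of_le_affine (abs_nonneg y) hy (hminus y)]

theorem stmt13_general (P : Measure X) [IsProbabilityMeasure P]
    (φ : ℝ → ℝ≥0∞) (φ' : ℝ → ℝ)
    (hconv : ConvexOn ℝ≥0 Set.univ φ)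
    (hlsc : LowerSemicontinuous φ)
    (hderiv : ∀ x ∈ {y : ℝ | φ y ≠ ⊤},
      HasDerivWithinAt (fun y => (φ y).toReal) (φ' x) {y : ℝ | φ y ≠ ⊤} x)
    (hgrow : ∃ δ : ℝ, δ ∈ Ioo (0 : ℝ) 1 ∧ ∀ c ∈ Icc (1 - δ) (1 + δ),
      ∃ c₁ c₂ c₃ : ℝ≥0, ∀ x : ℝ,
        φ (c * x) ≤ (c₁ : ℝ≥0∞) * φ x + (c₂ : ℝ≥0∞) * ENNReal.ofReal |x| + (c₃ : ℝ≥0∞)) :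
    ∀ Q : SignedMeasure X, Q ≪ᵥ P.toENNRealVectorMeasure → div φ Q P ≠ ⊤ →
      Integrable (fun x => Q.rnDeriv P x * φ' (Q.rnDeriv P x)) P := by
  intro Q _ hdiv
  obtain ⟨δ, ⟨hδ, -⟩, hg⟩ := hgrow
  obtain ⟨c₁, c₂, c₃, hplus⟩ := hg (1 + δ) ⟨by linarith, le_rfl⟩
  obtain ⟨d₁, d₂, d₃, hminus⟩ := hg (1 - δ) ⟨le_rfl, by linarith⟩
  set q := Q.rnDeriv P
  have hq : Measurable q := SignedMeasure.measurable_rnDeriv Q P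
  have hφq : Measurable (φ ∘ q) := hlsc.measurable.comp hq
  have hqS : ∀ᵐ x ∂P, φ (q x) ≠ ⊤ := (ae_lt_top hφq hdiv).mono fun _ => LT.lt.ne
  have hfS := convexOn_toReal_of_convexOn_nnreal hconv
  have hφ'q : AEMeasurable (φ' ∘ q) P := aemeasurable_comp_of_monotoneOn
    hfS.1.ordConnected.measurableSet (hfS.monotoneOn_of_hasDerivWithinAt hderiv) hq hqS
  have hdom : Integrable (fun x =>
      δ⁻¹ * ((c₁ + d₁ : ℝ) * (φ (q x)).toReal + (c₂ + d₂ : ℝ) * |q x| + (c₃ + d₃ : ℝ))) P :=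
    ((((integrable_toReal_of_lintegral_ne_top hφq.aemeasurable hdiv).const_mul _).add
      ((SignedMeasure.integrable_rnDeriv Q P).abs.const_mul _)).add (integrable_const _)).const_mul _
  refine hdom.mono' (hq.aemeasurable.mul hφ'q).aestronglyMeasurable ?_
  filter_upwards [hqS] with x hx
  rw [Real.norm_eq_abs, le_inv_mul_iff₀ hδ]
  exact mul_abs_mul_deriv_le_of_growth hconv hderiv hδ.le hplus hminus hx

/-- Let `φ` be differentiable convex (with derivative `φ'` on its domain)
satisfying the scaling growth condition.  Then for every `Q ≪ P` with `φ(Q,P) < ∞`, the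
function `q·φ'(q)` belongs to `L¹(X,P)`, where `q = dQ/dP`. -/
theorem stmt13 (P : Measure X) [IsProbabilityMeasure P]
    (φ : ℝ → ℝ≥0∞) (φ' : ℝ → ℝ)
    (hconv : ConvexOn ℝ≥0 Set.univ φ)
    (hlsc : LowerSemicontinuous φ)
    (hone : φ 1 = 0)
    (hderiv : ∀ x ∈ {y : ℝ | φ y ≠ ⊤},
      HasDerivWithinAt (fun y => (φ y).toReal) (φ' x) {y : ℝ | φ y ≠ ⊤} x)
    (hgrow : ∃ δ : ℝ, δ ∈ Ioo (0 : ℝ) 1 ∧ ∀ c ∈ Icc (1 - δ) (1 + δ),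
      ∃ c₁ c₂ c₃ : ℝ≥0, ∀ x : ℝ,
        φ (c * x) ≤ (c₁ : ℝ≥0∞) * φ x + (c₂ : ℝ≥0∞) * ENNReal.ofReal |x| + (c₃ : ℝ≥0∞)) :
    ∀ Q : SignedMeasure X, Q ≪ᵥ P.toENNRealVectorMeasure → div φ Q P ≠ ⊤ →
      Integrable (fun x => Q.rnDeriv P x * φ' (Q.rnDeriv P x)) P :=
  stmt13_general P φ φ' hconv hlsc hderiv hgrow
end
end

section
/- (Necessity on convex sets.) Let φ be differentiable convex satisfying the scaling growth condition (∃ 0<δ<1 such that ∀c∈[1−δ,1+δ] ∃ c₁,c₂,c₃ with φ(cx) ≤ c₁φ(x)+c₂|x|+c₃ for all x), and let Ω be a convex set of finite signed measures. If Q* ∈ Ω is a φ-projection of P on Ω with φ(Q*,P) < ∞, then for every Q ∈ Ω with φ(Q,P) < ∞, the function φ'(q*)·q is in L¹(X,P) and ∫ φ'(q*) dQ* ≤ ∫ φ'(q*) dQ. -/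
open MeasureTheory Filter Topology Set
open scoped ENNReal NNReal Classical

noncomputable section

variable {X : Type*} [MeasurableSpace X]

/-!
Perturb the projection towards a competitor: `(1 - ε) Q* + ε Q` lies in `Ω` and has density
`(1 - ε) q* + ε q`, so minimality gives `∫ φ(q*) ≤ ∫ φ((1 - ε) q* + ε q)`. By convexity the
difference quotients `(φ((1 - ε) q* + ε q) - φ(q*)) / ε` decrease as `ε ↓ 0` to
`φ'(q*) (q - q*)`; they have nonnegative integrals and are bounded above by the integrable
`φ(q) - φ(q*)`, so monotone convergence makes `φ'(q*) (q - q*)` integrable with nonnegative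
integral. The scaling growth condition makes `φ((1 ± δ) q*)` integrable, and the tangent-line
inequalities at `q*` in the directions `± δ q*` dominate `|φ'(q*) q*|` by
`(φ((1 + δ) q*) + φ((1 - δ) q*)) / δ`. Adding the two gives the claim.
-/

open AffineMap

section ENNRealConvex

variable {E : Type*} [AddCommGroup E] [Module ℝ E] {φ : E → ℝ≥0∞}

theorem ConvexOn.apply_add_le_ofReal_mul (hφ : ConvexOn ℝ≥0 univ φ) (x y : E) {a b : ℝ}
    (ha : 0 ≤ a) (hb : 0 ≤ b) (hab : a + b = 1) :
    φ (a • x + b • y) ≤ ENNReal.ofReal a * φ x + ENNReal.ofReal b * φ y := by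
  have h := hφ.2 (mem_univ x) (mem_univ y) (by positivity) (by positivity)
    (by rw [← Real.toNNReal_add ha hb, hab, Real.toNNReal_one])
  simp only [NNReal.smul_def, Real.coe_toNNReal _ ha, Real.coe_toNNReal _ hb,
    ENNReal.smul_def, smul_eq_mul] at h
  exact h

theorem ConvexOn.convex_setOf_ne_top (hφ : ConvexOn ℝ≥0 univ φ) :
    Convex ℝ {x | φ x ≠ ⊤} := fun x hx y hy a b ha hb hab =>
  ne_top_of_le_ne_top (by simp_all [ENNReal.mul_ne_top])
    (hφ.apply_add_le_ofReal_mul x y ha hb hab)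

theorem ConvexOn.toReal_of_ne_top (hφ : ConvexOn ℝ≥0 univ φ) :
    ConvexOn ℝ {x | φ x ≠ ⊤} (fun x => (φ x).toReal) := by
  refine ⟨hφ.convex_setOf_ne_top, fun x hx y hy a b ha hb hab => ?_⟩
  calc (φ (a • x + b • y)).toReal
      ≤ (ENNReal.ofReal a * φ x + ENNReal.ofReal b * φ y).toReal :=
        ENNReal.toReal_mono (by finiteness) (hφ.apply_add_le_ofReal_mul x y ha hb hab)
    _ = a • (φ x).toReal + b • (φ y).toReal := by
        rw [ENNReal.toReal_add (by finiteness) (by finiteness), ENNReal.toReal_mul,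
          ENNReal.toReal_mul, ENNReal.toReal_ofReal ha, ENNReal.toReal_ofReal hb, smul_eq_mul,
          smul_eq_mul]

end ENNRealConvex

def diffQuot (f : ℝ → ℝ) (u v ε : ℝ) : ℝ := (f ((1 - ε) * u + ε * v) - f u) / ε

section DiffQuot

variable {S : Set ℝ} {f : ℝ → ℝ} {f' u v : ℝ}

theorem diffQuot_eq_slope (f : ℝ → ℝ) (u v : ℝ) :
    diffQuot f u v = slope (f ∘ lineMap u v) 0 := by
  ext ε
  simp [diffQuot, slope_def_field, lineMap_apply_module]

theorem diffQuot_one (f : ℝ → ℝ) (u v : ℝ) : diffQuot f u v 1 = f v - f u := by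
  simp [diffQuot]

theorem ConvexOn.monotoneOn_diffQuot (hf : ConvexOn ℝ S f) (hu : u ∈ S) (hv : v ∈ S) :
    MonotoneOn (diffQuot f u v) (Ioc 0 1) := by
  have hψ : ConvexOn ℝ (Icc (0 : ℝ) 1) (f ∘ lineMap u v) :=
    (hf.comp_affineMap (lineMap u v)).subset (fun t ht => hf.1.lineMap_mem hu hv ht)
      (convex_Icc 0 1)
  intro s hs t ht hst
  simp only [diffQuot_eq_slope, slope_def_field]
  simpa using hψ.secant_mono (left_mem_Icc.2 zero_le_one) (Ioc_subset_Icc_self hs)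
    (Ioc_subset_Icc_self ht) hs.1.ne' ht.1.ne' hst

theorem Convex.tendsto_diffQuot (hS : Convex ℝ S) (hu : u ∈ S) (hv : v ∈ S)
    (hd : HasDerivWithinAt f f' S u) :
    Tendsto (diffQuot f u v) (𝓝[>] 0) (𝓝 (f' * (v - u))) := by
  have hψ : HasDerivWithinAt (f ∘ lineMap u v) (f' * (v - u)) (Ioc (0 : ℝ) 1) 0 :=
    (by simpa using hd : HasDerivWithinAt f f' S (lineMap u v (0 : ℝ))).comp 0
      hasDerivWithinAt_lineMap fun t ht => hS.lineMap_mem hu hv (Ioc_subset_Icc_self ht)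
  rw [hasDerivWithinAt_iff_tendsto_slope' (by simp), nhdsWithin_Ioc_eq_nhdsGT zero_lt_one] at hψ
  rwa [diffQuot_eq_slope]

theorem ConvexOn.deriv_mul_sub_le_diffQuot (hf : ConvexOn ℝ S f) (hu : u ∈ S) (hv : v ∈ S)
    (hd : HasDerivWithinAt f f' S u) {ε : ℝ} (hε : ε ∈ Ioc 0 1) :
    f' * (v - u) ≤ diffQuot f u v ε := by
  refine le_of_tendsto (hf.1.tendsto_diffQuot hu hv hd) ?_
  filter_upwards [Ioo_mem_nhdsGT hε.1] with t ht
  exact hf.monotoneOn_diffQuot hu hv ⟨ht.1, ht.2.le.trans hε.2⟩ hε ht.2.le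

theorem ConvexOn.deriv_mul_sub_le (hf : ConvexOn ℝ S f) (hu : u ∈ S) (hv : v ∈ S)
    (hd : HasDerivWithinAt f f' S u) : f' * (v - u) ≤ f v - f u :=
  diffQuot_one f u v ▸ hf.deriv_mul_sub_le_diffQuot hu hv hd ⟨zero_lt_one, le_rfl⟩

end DiffQuot

theorem integrable_of_antitone_of_integral_ge {μ : Measure X}
    {f : ℕ → X → ℝ} {F : X → ℝ} {C : ℝ} (hf : ∀ n, Integrable (f n) μ)
    (h_mono : ∀ᵐ x ∂μ, Antitone fun n => f n x)
    (h_tendsto : ∀ᵐ x ∂μ, Tendsto (fun n => f n x) atTop (𝓝 (F x)))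
    (h_ge : ∀ n, C ≤ ∫ x, f n x ∂μ) : Integrable F μ := by
  have h_nonneg : ∀ᵐ x ∂μ, ∀ n, 0 ≤ f 0 x - f n x := by
    filter_upwards [h_mono] with x hx n using sub_nonneg.2 (hx n.zero_le)
  have h_lim : ∫⁻ x, ENNReal.ofReal (f 0 x - F x) ∂μ ≤ ENNReal.ofReal (∫ x, f 0 x ∂μ - C) := by
    refine le_of_tendsto' (lintegral_tendsto_of_tendsto_of_monotone
      (fun n => ((hf 0).sub (hf n)).aemeasurable.ennreal_ofReal) ?_ ?_) fun n => ?_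
    · filter_upwards [h_mono] with x hx n m hnm
      exact ENNReal.ofReal_le_ofReal (sub_le_sub_left (hx hnm) _)
    · filter_upwards [h_tendsto] with x hx
      exact (ENNReal.continuous_ofReal.tendsto _).comp (tendsto_const_nhds.sub hx)
    · rw [← ofReal_integral_eq_lintegral_ofReal ((hf 0).sub (hf n))
        (by filter_upwards [h_nonneg] with x hx using hx n)]
      change ENNReal.ofReal (∫ x, f 0 x - f n x ∂μ) ≤ _
      rw [integral_sub (hf 0) (hf n)]
      exact ENNReal.ofReal_le_ofReal (by linarith [h_ge n])
  have h_diff : Integrable (fun x => f 0 x - F x) μ := by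
    refine (integrable_toReal_of_lintegral_ne_top ?_ (ne_top_of_le_ne_top (by simp) h_lim)).congr ?_
    · exact ((hf 0).aemeasurable.sub (aemeasurable_of_tendsto_metrizable_ae' (fun n =>
        (hf n).aemeasurable) h_tendsto)).ennreal_ofReal
    · filter_upwards [h_nonneg, h_tendsto] with x hx hxF
      exact ENNReal.toReal_ofReal (ge_of_tendsto' (tendsto_const_nhds.sub hxF) hx)
  exact ((hf 0).sub h_diff).congr (Eventually.of_forall fun x => by simp)

theorem one_div_add_one_mem_Ioc (n : ℕ) : (1 / (n + 1) : ℝ) ∈ Ioc 0 1 :=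
  ⟨Nat.one_div_pos_of_nat, div_le_one_of_le₀ (by simp) (by positivity)⟩

section FirstVariation

variable {μ : Measure X} {S : Set ℝ} {f f' : ℝ → ℝ} {p q : X → ℝ}

theorem ConvexOn.ae_antitone_tendsto_diffQuot (hf : ConvexOn ℝ S f)
    (hd : ∀ u ∈ S, HasDerivWithinAt f (f' u) S u)
    (hp : ∀ᵐ x ∂μ, p x ∈ S) (hq : ∀ᵐ x ∂μ, q x ∈ S) :
    ∀ᵐ x ∂μ, Antitone (fun n : ℕ => diffQuot f (p x) (q x) (1 / (n + 1))) ∧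
      Tendsto (fun n : ℕ => diffQuot f (p x) (q x) (1 / (n + 1))) atTop
        (𝓝 (f' (p x) * (q x - p x))) := by
  have hε := one_div_add_one_mem_Ioc
  filter_upwards [hp, hq] with x hpx hqx
  refine ⟨fun n m hnm => hf.monotoneOn_diffQuot hpx hqx (hε m) (hε n)
    (Nat.one_div_le_one_div hnm), ?_⟩
  exact (hf.1.tendsto_diffQuot hpx hqx (hd _ hpx)).comp
    (tendsto_nhdsWithin_iff.2 ⟨tendsto_one_div_add_atTop_nhds_zero_nat,
      Eventually.of_forall fun n => (hε n).1⟩)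

theorem ConvexOn.aestronglyMeasurable_deriv_mul_sub (hf : ConvexOn ℝ S f) (hfm : Measurable f)
    (hd : ∀ u ∈ S, HasDerivWithinAt f (f' u) S u) (hpm : Measurable p) (hqm : Measurable q)
    (hp : ∀ᵐ x ∂μ, p x ∈ S) (hq : ∀ᵐ x ∂μ, q x ∈ S) :
    AEStronglyMeasurable (fun x => f' (p x) * (q x - p x)) μ :=
  aestronglyMeasurable_of_tendsto_ae atTop (fun n => by unfold diffQuot; fun_prop)
    ((hf.ae_antitone_tendsto_diffQuot hd hp hq).mono fun _ hx => hx.2)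

theorem ConvexOn.integrable_deriv_mul_sub_of_integral_le (hf : ConvexOn ℝ S f)
    (hd : ∀ u ∈ S, HasDerivWithinAt f (f' u) S u)
    (hp : ∀ᵐ x ∂μ, p x ∈ S) (hq : ∀ᵐ x ∂μ, q x ∈ S)
    (hint : ∀ ε ∈ Icc (0 : ℝ) 1, Integrable (fun x => f ((1 - ε) * p x + ε * q x)) μ)
    (hle : ∀ ε ∈ Ioc (0 : ℝ) 1, ∫ x, f (p x) ∂μ ≤ ∫ x, f ((1 - ε) * p x + ε * q x) ∂μ) :
    Integrable (fun x => f' (p x) * (q x - p x)) μ ∧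
      0 ≤ ∫ x, f' (p x) * (q x - p x) ∂μ := by
  have hε := one_div_add_one_mem_Ioc
  have hp_int : Integrable (fun x => f (p x)) μ := by
    simpa using hint 0 (left_mem_Icc.2 zero_le_one)
  have hg_int : ∀ n : ℕ, Integrable (fun x => diffQuot f (p x) (q x) (1 / (n + 1))) μ :=
    fun n => ((hint _ (Ioc_subset_Icc_self (hε n))).sub hp_int).div_const _
  have hg_nonneg : ∀ n : ℕ, 0 ≤ ∫ x, diffQuot f (p x) (q x) (1 / (n + 1)) ∂μ := by
    intro n
    simp only [diffQuot]
    rw [integral_div, integral_sub (hint _ (Ioc_subset_Icc_self (hε n))) hp_int]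
    exact div_nonneg (sub_nonneg.2 (hle _ (hε n))) (hε n).1.le
  have hae := hf.ae_antitone_tendsto_diffQuot hd hp hq
  have h_mono := hae.mono fun _ hx => hx.1
  have h_tendsto := hae.mono fun _ hx => hx.2
  have h_int := integrable_of_antitone_of_integral_ge hg_int h_mono h_tendsto hg_nonneg
  exact ⟨h_int, ge_of_tendsto' (integral_tendsto_of_tendsto_of_antitone hg_int h_int h_mono
    h_tendsto) hg_nonneg⟩

theorem ConvexOn.integrable_deriv_mul_self (hf : ConvexOn ℝ S f) (hf0 : ∀ y, 0 ≤ f y)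
    (hfm : Measurable f) (hd : ∀ u ∈ S, HasDerivWithinAt f (f' u) S u) (hpm : Measurable p)
    {δ : ℝ} (hδ : 0 < δ) (hp : ∀ᵐ x ∂μ, p x ∈ S) (hp_plus : ∀ᵐ x ∂μ, (1 + δ) * p x ∈ S)
    (hp_minus : ∀ᵐ x ∂μ, (1 - δ) * p x ∈ S) (hint_plus : Integrable (fun x => f ((1 + δ) * p x)) μ)
    (hint_minus : Integrable (fun x => f ((1 - δ) * p x)) μ) :
    Integrable (fun x => f' (p x) * p x) μ := by
  -- `f'` is not assumed measurable; `f' ∘ p` is, as an a.e. limit of difference quotients.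
  have hmeas : AEStronglyMeasurable (fun x => f' (p x) * p x) μ := by
    have h := (hf.aestronglyMeasurable_deriv_mul_sub hfm hd hpm (hpm.const_mul (1 + δ)) hp
      hp_plus).const_mul δ⁻¹
    refine h.congr (Eventually.of_forall fun x => ?_)
    field_simp
    ring
  refine Integrable.mono' ((hint_plus.add hint_minus).const_mul δ⁻¹) hmeas ?_
  filter_upwards [hp, hp_plus, hp_minus] with x hx hx_plus hx_minus
  have h_plus : δ * (f' (p x) * p x) ≤ f ((1 + δ) * p x) := by
    have := hf.deriv_mul_sub_le hx hx_plus (hd _ hx)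
    linarith [hf0 (p x)]
  have h_minus : -(δ * (f' (p x) * p x)) ≤ f ((1 - δ) * p x) := by
    have := hf.deriv_mul_sub_le hx hx_minus (hd _ hx)
    linarith [hf0 (p x)]
  rw [Real.norm_eq_abs, Pi.add_apply, le_inv_mul_iff₀ hδ, ← abs_of_pos hδ, ← abs_mul,
    abs_of_pos hδ, abs_le]
  constructor <;> linarith [hf0 ((1 + δ) * p x), hf0 ((1 - δ) * p x)]

end FirstVariation

section Divergence

variable {μ : Measure X} {φ : ℝ → ℝ≥0∞} {φ' : ℝ → ℝ} {p q : X → ℝ}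

theorem ConvexOn.lintegral_comp_convexComb_ne_top (hφ : ConvexOn ℝ≥0 univ φ)
    (hφm : Measurable φ) (hpm : Measurable p) (hp : ∫⁻ x, φ (p x) ∂μ ≠ ⊤)
    (hq : ∫⁻ x, φ (q x) ∂μ ≠ ⊤) {ε : ℝ} (hε : ε ∈ Icc (0 : ℝ) 1) :
    ∫⁻ x, φ ((1 - ε) * p x + ε * q x) ∂μ ≠ ⊤ := by
  refine ne_top_of_le_ne_top ?_ (lintegral_mono fun x =>
    hφ.apply_add_le_ofReal_mul (p x) (q x) (sub_nonneg.2 hε.2) hε.1 (sub_add_cancel 1 ε))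
  have hφp : Measurable fun x => φ (p x) := hφm.comp hpm
  rw [lintegral_add_left' (hφp.aemeasurable.const_mul _),
    lintegral_const_mul' _ _ ENNReal.ofReal_ne_top, lintegral_const_mul' _ _ ENNReal.ofReal_ne_top]
  finiteness

theorem lintegral_comp_const_mul_ne_top [IsFiniteMeasure μ] {c : ℝ} {c₁ c₂ c₃ : ℝ≥0}
    (hgrow : ∀ y : ℝ, φ (c * y) ≤ c₁ * φ y + c₂ * ENNReal.ofReal |y| + c₃)
    (hφm : Measurable φ) (hpm : Measurable p) (hp_int : Integrable p μ)
    (hp : ∫⁻ x, φ (p x) ∂μ ≠ ⊤) :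
    ∫⁻ x, φ (c * p x) ∂μ ≠ ⊤ := by
  refine ne_top_of_le_ne_top ?_ (lintegral_mono fun x => hgrow (p x))
  have hp_enorm : ∫⁻ x, ENNReal.ofReal |p x| ∂μ ≠ ⊤ := by
    simpa only [Real.enorm_eq_ofReal_abs] using hp_int.2.ne
  have hφp : Measurable fun x => φ (p x) := hφm.comp hpm
  rw [lintegral_add_right _ measurable_const,
    lintegral_add_left' (hφp.aemeasurable.const_mul _),
    lintegral_const_mul' _ _ ENNReal.coe_ne_top, lintegral_const_mul' _ _ ENNReal.coe_ne_top,
    lintegral_const]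
  finiteness

theorem ConvexOn.integral_deriv_mul_le_of_lintegral_le (hφ : ConvexOn ℝ≥0 univ φ)
    (hφm : Measurable φ)
    (hd : ∀ u ∈ {y : ℝ | φ y ≠ ⊤},
      HasDerivWithinAt (fun y => (φ y).toReal) (φ' u) {y : ℝ | φ y ≠ ⊤} u)
    (hpm : Measurable p) (hqm : Measurable q)
    (hp : ∫⁻ x, φ (p x) ∂μ ≠ ⊤) (hq : ∫⁻ x, φ (q x) ∂μ ≠ ⊤) {δ : ℝ} (hδ : 0 < δ)
    (hp_plus : ∫⁻ x, φ ((1 + δ) * p x) ∂μ ≠ ⊤) (hp_minus : ∫⁻ x, φ ((1 - δ) * p x) ∂μ ≠ ⊤)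
    (hmin : ∀ ε ∈ Ioc (0 : ℝ) 1, ∫⁻ x, φ (p x) ∂μ ≤ ∫⁻ x, φ ((1 - ε) * p x + ε * q x) ∂μ) :
    Integrable (fun x => φ' (p x) * q x) μ ∧
      ∫ x, φ' (p x) * p x ∂μ ≤ ∫ x, φ' (p x) * q x ∂μ := by
  have hint_of : ∀ r : X → ℝ, Measurable r → ∫⁻ x, φ (r x) ∂μ ≠ ⊤ →
      Integrable (fun x => (φ (r x)).toReal) μ := fun r hr h =>
    integrable_toReal_of_lintegral_ne_top (hφm.comp hr).aemeasurable h
  have hmem_of : ∀ r : X → ℝ, Measurable r → ∫⁻ x, φ (r x) ∂μ ≠ ⊤ →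
      ∀ᵐ x ∂μ, φ (r x) ≠ ⊤ := fun r hr h =>
    (ae_lt_top (hφm.comp hr) h).mono fun _ => LT.lt.ne
  have hintegral_of : ∀ r : X → ℝ, Measurable r → ∫⁻ x, φ (r x) ∂μ ≠ ⊤ →
      ∫ x, (φ (r x)).toReal ∂μ = (∫⁻ x, φ (r x) ∂μ).toReal := fun r hr h =>
    integral_toReal (hφm.comp hr).aemeasurable (ae_lt_top (hφm.comp hr) h)
  have hcomb_m : ∀ ε : ℝ, Measurable fun x => (1 - ε) * p x + ε * q x := by fun_prop
  have hcomb_fin : ∀ ε ∈ Icc (0 : ℝ) 1, ∫⁻ x, φ ((1 - ε) * p x + ε * q x) ∂μ ≠ ⊤ :=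
    fun _ hε => hφ.lintegral_comp_convexComb_ne_top hφm hpm hp hq hε
  have hle : ∀ ε ∈ Ioc (0 : ℝ) 1, ∫ x, (φ (p x)).toReal ∂μ ≤
      ∫ x, (φ ((1 - ε) * p x + ε * q x)).toReal ∂μ := fun ε hε => by
    have hε_fin := hcomb_fin ε (Ioc_subset_Icc_self hε)
    rw [hintegral_of p hpm hp, hintegral_of _ (hcomb_m ε) hε_fin]
    exact ENNReal.toReal_mono hε_fin (hmin ε hε)
  have hf := hφ.toReal_of_ne_top
  obtain ⟨h_sub_int, h_sub_nonneg⟩ := hf.integrable_deriv_mul_sub_of_integral_le hd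
    (hmem_of p hpm hp) (hmem_of q hqm hq)
    (fun ε hε => hint_of _ (hcomb_m ε) (hcomb_fin ε hε)) hle
  have h_self_int := hf.integrable_deriv_mul_self (fun _ => ENNReal.toReal_nonneg)
    hφm.ennreal_toReal hd hpm hδ (hmem_of p hpm hp)
    (hmem_of _ (hpm.const_mul _) hp_plus) (hmem_of _ (hpm.const_mul _) hp_minus)
    (hint_of _ (hpm.const_mul _) hp_plus) (hint_of _ (hpm.const_mul _) hp_minus)
  have h_split : (fun x => φ' (p x) * q x) =
      fun x => φ' (p x) * (q x - p x) + φ' (p x) * p x := by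
    ext x; ring
  refine ⟨h_split ▸ h_sub_int.add h_self_int, ?_⟩
  rw [h_split, integral_add h_sub_int h_self_int]
  linarith

end Divergence

section SignedMeasure

variable {P : Measure X} {φ : ℝ → ℝ≥0∞} {Q R : SignedMeasure X}

theorem absolutelyContinuous_of_divext_ne_top (h : divext φ Q P ≠ ⊤) :
    Q ≪ᵥ P.toENNRealVectorMeasure := by
  by_contra hQ
  exact h (if_neg hQ)

theorem divext_of_absolutelyContinuous (hQ : Q ≪ᵥ P.toENNRealVectorMeasure) :
    divext φ Q P = ∫⁻ x, φ (Q.rnDeriv P x) ∂P :=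
  if_pos hQ

theorem divext_smul_add_smul [SigmaFinite P] (hQ : Q ≪ᵥ P.toENNRealVectorMeasure)
    (hR : R ≪ᵥ P.toENNRealVectorMeasure) (a b : ℝ) :
    divext φ (a • Q + b • R) P = ∫⁻ x, φ (a * Q.rnDeriv P x + b * R.rnDeriv P x) ∂P := by
  rw [divext_of_absolutelyContinuous (hQ.smul.add hR.smul)]
  refine lintegral_congr_ae ?_
  filter_upwards [SignedMeasure.rnDeriv_add (a • Q) (b • R) P,
    SignedMeasure.rnDeriv_smul Q P a, SignedMeasure.rnDeriv_smul R P b] with x h_add hQa hRb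
  rw [h_add, Pi.add_apply, hQa, hRb, Pi.smul_apply, Pi.smul_apply, smul_eq_mul, smul_eq_mul]

end SignedMeasure

theorem stmt15_general (P : Measure X) [IsProbabilityMeasure P]
    (φ : ℝ → ℝ≥0∞) (φ' : ℝ → ℝ)
    (hconv : ConvexOn ℝ≥0 Set.univ φ)
    (hlsc : LowerSemicontinuous φ)
    (hderiv : ∀ x ∈ {y : ℝ | φ y ≠ ⊤},
      HasDerivWithinAt (fun y => (φ y).toReal) (φ' x) {y : ℝ | φ y ≠ ⊤} x)
    (hgrow : ∃ δ : ℝ, δ ∈ Ioo (0 : ℝ) 1 ∧ ∀ c ∈ Icc (1 - δ) (1 + δ),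
      ∃ c₁ c₂ c₃ : ℝ≥0, ∀ x : ℝ,
        φ (c * x) ≤ (c₁ : ℝ≥0∞) * φ x + (c₂ : ℝ≥0∞) * ENNReal.ofReal |x| + (c₃ : ℝ≥0∞))
    (Ω : Set (SignedMeasure X)) (hΩ : Convex ℝ Ω)
    (Qs : SignedMeasure X) (hQs : Qs ∈ Ω)
    (hfin : divext φ Qs P ≠ ⊤)
    (hproj : ∀ Q ∈ Ω, divext φ Qs P ≤ divext φ Q P) :
    ∀ Q ∈ Ω, divext φ Q P ≠ ⊤ →
      Integrable (fun x => φ' (Qs.rnDeriv P x) * Q.rnDeriv P x) P ∧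
      ∫ x, φ' (Qs.rnDeriv P x) * Qs.rnDeriv P x ∂P ≤
        ∫ x, φ' (Qs.rnDeriv P x) * Q.rnDeriv P x ∂P := by
  intro Q hQ hQfin
  obtain ⟨δ, ⟨hδ, -⟩, hgrowth⟩ := hgrow
  obtain ⟨c₁, c₂, c₃, h_plus⟩ := hgrowth (1 + δ) ⟨by linarith, le_rfl⟩
  obtain ⟨d₁, d₂, d₃, h_minus⟩ := hgrowth (1 - δ) ⟨le_rfl, by linarith⟩
  have hQs_ac := absolutelyContinuous_of_divext_ne_top hfin
  have hQ_ac := absolutelyContinuous_of_divext_ne_top hQfin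
  have hφm : Measurable φ := hlsc.measurable
  have hQsm := SignedMeasure.measurable_rnDeriv Qs P
  have hQs_int := SignedMeasure.integrable_rnDeriv Qs P
  rw [divext_of_absolutelyContinuous hQs_ac] at hfin
  rw [divext_of_absolutelyContinuous hQ_ac] at hQfin
  refine hconv.integral_deriv_mul_le_of_lintegral_le hφm hderiv hQsm
    (SignedMeasure.measurable_rnDeriv Q P) hfin hQfin hδ
    (lintegral_comp_const_mul_ne_top h_plus hφm hQsm hQs_int hfin)
    (lintegral_comp_const_mul_ne_top h_minus hφm hQsm hQs_int hfin) fun ε hε => ?_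
  calc ∫⁻ x, φ (Qs.rnDeriv P x) ∂P = divext φ Qs P := (divext_of_absolutelyContinuous hQs_ac).symm
    _ ≤ divext φ ((1 - ε) • Qs + ε • Q) P :=
      hproj _ (hΩ hQs hQ (sub_nonneg.2 hε.2) hε.1.le (sub_add_cancel 1 ε))
    _ = _ := divext_smul_add_smul hQs_ac hQ_ac _ _

/-- (Necessity on convex sets.)  Let `φ` be differentiable convex satisfying
the scaling growth condition and let `Ω` be a convex set of finite signed measures.  If
`Qs ∈ Ω` is a φ-projection of `P` on `Ω` with `φ(Qs,P) < ∞`, then for every `Q ∈ Ω` with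
`φ(Q,P) < ∞` the function `φ'(q*)·q` is in `L¹(X,P)` and
`∫ φ'(q*) dQ* ≤ ∫ φ'(q*) dQ`. -/
theorem stmt15 (P : Measure X) [IsProbabilityMeasure P]
    (φ : ℝ → ℝ≥0∞) (φ' : ℝ → ℝ)
    (hconv : ConvexOn ℝ≥0 Set.univ φ)
    (hlsc : LowerSemicontinuous φ)
    (hone : φ 1 = 0)
    (hderiv : ∀ x ∈ {y : ℝ | φ y ≠ ⊤},
      HasDerivWithinAt (fun y => (φ y).toReal) (φ' x) {y : ℝ | φ y ≠ ⊤} x)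
    (hgrow : ∃ δ : ℝ, δ ∈ Ioo (0 : ℝ) 1 ∧ ∀ c ∈ Icc (1 - δ) (1 + δ),
      ∃ c₁ c₂ c₃ : ℝ≥0, ∀ x : ℝ,
        φ (c * x) ≤ (c₁ : ℝ≥0∞) * φ x + (c₂ : ℝ≥0∞) * ENNReal.ofReal |x| + (c₃ : ℝ≥0∞))
    (Ω : Set (SignedMeasure X)) (hΩ : Convex ℝ Ω)
    (Qs : SignedMeasure X) (hQs : Qs ∈ Ω)
    (hfin : divext φ Qs P ≠ ⊤)
    (hproj : ∀ Q ∈ Ω, divext φ Qs P ≤ divext φ Q P) :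
    ∀ Q ∈ Ω, divext φ Q P ≠ ⊤ →
      Integrable (fun x => φ' (Qs.rnDeriv P x) * Q.rnDeriv P x) P ∧
      ∫ x, φ' (Qs.rnDeriv P x) * Qs.rnDeriv P x ∂P ≤
        ∫ x, φ' (Qs.rnDeriv P x) * Q.rnDeriv P x ∂P :=
  stmt15_general P φ φ' hconv hlsc hderiv hgrow Ω hΩ Qs hQs hfin hproj
end
end

section
/- (Finite linear constraints, sufficiency.) Let g₁,…,g_l be measurable functions, S = { Q ≪ P finite signed measure : Q(X)=1, ∫ g_i dQ = 0 for i=1,…,l }, and φ differentiable convex. Let Q* ∈ S with φ(Q*,P) < ∞. If there exist constants c₀,…,c_l ∈ ℝ with φ'(dQ*/dP)(x) = c₀ + Σ_{i=1}^l c_i g_i(x) P-a.e., then Q* is a φ-projection of P on S: φ(Q*,P) ≤ φ(Q,P) for all Q ∈ S with the integrability φ'(q*)q ∈ L¹(P). -/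
open MeasureTheory Filter Topology Set
open scoped ENNReal NNReal Classical

noncomputable section

variable {X : Type*} [MeasurableSpace X]

/-- The set `S` of signed measures `Q ≪ P` with total mass one, integrating the functions
`g i` with `∫ g i dQ = 0`. -/
def linconSet (P : Measure X) {l : ℕ} (g : Fin l → X → ℝ) : Set (SignedMeasure X) :=
  {Q : SignedMeasure X | Q ≪ᵥ P.toENNRealVectorMeasure ∧ Q Set.univ = 1 ∧
    ∀ i, Integrable (g i) Q.totalVariation ∧ sint Q (g i) = 0}

/-! Write `q* = dQ*/dP`. Since `φ'(q*) = c₀ + Σ cᵢ gᵢ`, the constraints defining `S` give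
`∫ φ'(q*) q dP = c₀` for the density `q` of every `Q ∈ S`, in particular for `q*` itself.
Integrating the tangent-line inequality `φ(q) ≥ φ(q*) + φ'(q*) (q - q*)` of the convex `φ`
therefore gives `φ(Q,P) ≥ φ(Q*,P)`. -/

theorem ConvexOn.toReal_of_ennreal {E : Type*} [AddCommGroup E] [Module ℝ E] {φ : E → ℝ≥0∞}
    (hφ : ConvexOn ℝ≥0 univ φ) : ConvexOn ℝ {y | φ y ≠ ⊤} fun y => (φ y).toReal := by
  have smul_ne_top : ∀ (θ : ℝ≥0) {a : E}, φ a ≠ ⊤ → θ • φ a ≠ ⊤ := fun θ a ha => by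
    rw [ENNReal.smul_def, smul_eq_mul]; exact ENNReal.mul_ne_top ENNReal.coe_ne_top ha
  have key : ∀ ⦃a⦄, φ a ≠ ⊤ → ∀ ⦃b⦄, φ b ≠ ⊤ → ∀ θ μ : ℝ≥0, θ + μ = 1 →
      φ ((θ : ℝ) • a + (μ : ℝ) • b) ≤ θ • φ a + μ • φ b ∧ θ • φ a + μ • φ b ≠ ⊤ :=
    fun a ha b hb θ μ hs => ⟨hφ.2 (mem_univ a) (mem_univ b) zero_le zero_le hs,
      ENNReal.add_ne_top.2 ⟨smul_ne_top θ ha, smul_ne_top μ hb⟩⟩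
  refine ⟨fun a ha b hb θ μ hθ hμ hs => ?_, fun a ha b hb θ μ hθ hμ hs => ?_⟩
  · lift θ to ℝ≥0 using hθ
    lift μ to ℝ≥0 using hμ
    obtain ⟨hle, hfin⟩ := key ha hb θ μ (NNReal.coe_eq_one.1 hs)
    exact ne_top_of_le_ne_top hfin hle
  · lift θ to ℝ≥0 using hθ
    lift μ to ℝ≥0 using hμ
    obtain ⟨hle, hfin⟩ := key ha hb θ μ (NNReal.coe_eq_one.1 hs)
    have h := ENNReal.toReal_mono hfin hle
    rwa [ENNReal.toReal_add (smul_ne_top θ ha) (smul_ne_top μ hb),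
      ENNReal.toReal_smul, ENNReal.toReal_smul] at h

theorem ConvexOn.add_mul_sub_le_of_hasDerivWithinAt {S : Set ℝ} {f : ℝ → ℝ} {f' a b : ℝ}
    (hf : ConvexOn ℝ S f) (ha : a ∈ S) (hb : b ∈ S) (hf' : HasDerivWithinAt f f' S a) :
    f a + f' * (b - a) ≤ f b := by
  rcases lt_trichotomy a b with hab | rfl | hab
  · have h := hf.le_slope_of_hasDerivWithinAt ha hb hab hf'
    rw [slope_def_field, le_div_iff₀ (sub_pos.2 hab)] at h
    linarith
  · simp
  · have h := hf.slope_le_of_hasDerivWithinAt hb ha hab hf'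
    rw [slope_def_field, div_le_iff₀ (sub_pos.2 hab)] at h
    linarith

namespace MeasureTheory.SignedMeasure

variable {P : Measure X} {Q : SignedMeasure X}

theorem posPart_negPart_absolutelyContinuous (hQ : Q ≪ᵥ P.toENNRealVectorMeasure) :
    Q.toJordanDecomposition.posPart ≪ P ∧ Q.toJordanDecomposition.negPart ≪ P := by
  rwa [absolutelyContinuous_ennreal_iff, VectorMeasure.ennrealToMeasure_toENNRealVectorMeasure,
    totalVariation_absolutelyContinuous_iff] at hQ

variable [SigmaFinite P] {f : X → ℝ}

theorem integrable_posPart_negPart_rnDeriv_mul (hQ : Q ≪ᵥ P.toENNRealVectorMeasure)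
    (hf : Integrable f Q.totalVariation) :
    Integrable (fun x => (Q.toJordanDecomposition.posPart.rnDeriv P x).toReal * f x) P ∧
      Integrable (fun x => (Q.toJordanDecomposition.negPart.rnDeriv P x).toReal * f x) P := by
  obtain ⟨hpos, hneg⟩ := posPart_negPart_absolutelyContinuous hQ
  exact ⟨(integrable_toReal_rnDeriv_mul_iff hpos).2 (hf.mono_measure (Measure.le_add_right le_rfl)),
    (integrable_toReal_rnDeriv_mul_iff hneg).2 (hf.mono_measure (Measure.le_add_left le_rfl))⟩

theorem integrable_rnDeriv_mul (hQ : Q ≪ᵥ P.toENNRealVectorMeasure)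
    (hf : Integrable f Q.totalVariation) : Integrable (fun x => Q.rnDeriv P x * f x) P := by
  obtain ⟨hf_pos, hf_neg⟩ := integrable_posPart_negPart_rnDeriv_mul hQ hf
  simp only [rnDeriv_def, sub_mul]
  exact hf_pos.sub hf_neg

theorem integral_rnDeriv_mul (hQ : Q ≪ᵥ P.toENNRealVectorMeasure)
    (hf : Integrable f Q.totalVariation) : ∫ x, Q.rnDeriv P x * f x ∂P = sint Q f := by
  obtain ⟨hpos, hneg⟩ := posPart_negPart_absolutelyContinuous hQ
  obtain ⟨hf_pos, hf_neg⟩ := integrable_posPart_negPart_rnDeriv_mul hQ hf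
  simp only [rnDeriv_def, sub_mul]
  rw [integral_sub hf_pos hf_neg, integral_toReal_rnDeriv_mul hpos,
    integral_toReal_rnDeriv_mul hneg, sint]

theorem integral_rnDeriv (hQ : Q ≪ᵥ P.toENNRealVectorMeasure) :
    ∫ x, Q.rnDeriv P x ∂P = Q univ := by
  conv_rhs => rw [← withDensityᵥ_rnDeriv_eq Q P hQ]
  rw [withDensityᵥ_apply (integrable_rnDeriv Q P) MeasurableSet.univ, setIntegral_univ]

end MeasureTheory.SignedMeasure

section linconSet

variable {P : Measure X} {l : ℕ} {g : Fin l → X → ℝ} {h : X → ℝ} {c₀ : ℝ}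
  {c : Fin l → ℝ} {R : SignedMeasure X}

theorem mul_rnDeriv_ae_eq (hh : ∀ᵐ x ∂P, h x = c₀ + ∑ i, c i * g i x) :
    (fun x => h x * R.rnDeriv P x) =ᵐ[P]
      fun x => c₀ * R.rnDeriv P x + ∑ i, c i * (R.rnDeriv P x * g i x) := by
  filter_upwards [hh] with x hx
  rw [hx, add_mul, Finset.sum_mul]
  congr 1
  exact Finset.sum_congr rfl fun i _ => by ring

theorem integrable_mul_rnDeriv_of_mem_linconSet [SigmaFinite P]
    (hh : ∀ᵐ x ∂P, h x = c₀ + ∑ i, c i * g i x) (hR : R ∈ linconSet P g) :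
    Integrable (fun x => h x * R.rnDeriv P x) P := by
  obtain ⟨hac, -, hRg⟩ := hR
  refine Integrable.congr ?_ (mul_rnDeriv_ae_eq hh).symm
  exact ((R.integrable_rnDeriv P).const_mul c₀).add (integrable_finsetSum _
    fun i _ => (SignedMeasure.integrable_rnDeriv_mul hac (hRg i).1).const_mul (c i))

theorem integral_mul_rnDeriv_of_mem_linconSet [SigmaFinite P]
    (hh : ∀ᵐ x ∂P, h x = c₀ + ∑ i, c i * g i x) (hR : R ∈ linconSet P g) :
    ∫ x, h x * R.rnDeriv P x ∂P = c₀ := by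
  obtain ⟨hac, hR1, hRg⟩ := hR
  have hint : ∀ i, Integrable (fun x => c i * (R.rnDeriv P x * g i x)) P := fun i =>
    (SignedMeasure.integrable_rnDeriv_mul hac (hRg i).1).const_mul (c i)
  rw [integral_congr_ae (mul_rnDeriv_ae_eq hh),
    integral_add ((R.integrable_rnDeriv P).const_mul c₀) (integrable_finsetSum _ fun i _ => hint i),
    integral_finsetSum _ fun i _ => hint i]
  simp only [integral_const_mul, SignedMeasure.integral_rnDeriv hac, hR1,
    SignedMeasure.integral_rnDeriv_mul hac (hRg _).1, (hRg _).2, mul_one, mul_zero,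
    Finset.sum_const_zero, add_zero]

end linconSet

theorem lintegral_comp_le_of_integral_deriv_mul_le {P : Measure X} {φ : ℝ → ℝ≥0∞} {φ' : ℝ → ℝ}
    (hφ : Measurable φ) (hconv : ConvexOn ℝ≥0 univ φ)
    (hderiv : ∀ x ∈ {y | φ y ≠ ⊤},
      HasDerivWithinAt (fun y => (φ y).toReal) (φ' x) {y | φ y ≠ ⊤} x)
    {p q : X → ℝ} (hp : Measurable p) (hq : Measurable q) (hfin : ∫⁻ x, φ (p x) ∂P ≠ ⊤)
    (hint_p : Integrable (fun x => φ' (p x) * p x) P)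
    (hint_q : Integrable (fun x => φ' (p x) * q x) P)
    (hle : ∫ x, φ' (p x) * p x ∂P ≤ ∫ x, φ' (p x) * q x ∂P) :
    ∫⁻ x, φ (p x) ∂P ≤ ∫⁻ x, φ (q x) ∂P := by
  by_cases hfin_q : ∫⁻ x, φ (q x) ∂P = ⊤
  · exact hfin_q ▸ le_top
  have hφp_meas : AEMeasurable (fun x => φ (p x)) P := (hφ.comp hp).aemeasurable
  have hφq_meas : AEMeasurable (fun x => φ (q x)) P := (hφ.comp hq).aemeasurable
  have hp_lt := ae_lt_top' hφp_meas hfin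
  have hq_lt := ae_lt_top' hφq_meas hfin_q
  have hφp := integrable_toReal_of_lintegral_ne_top hφp_meas hfin
  have hφq := integrable_toReal_of_lintegral_ne_top hφq_meas hfin_q
  have htangent : ∀ᵐ x ∂P,
      (φ (p x)).toReal + φ' (p x) * (q x - p x) ≤ (φ (q x)).toReal := by
    filter_upwards [hp_lt, hq_lt] with x hpx hqx
    exact (ConvexOn.toReal_of_ennreal hconv).add_mul_sub_le_of_hasDerivWithinAt hpx.ne hqx.ne
      (hderiv _ hpx.ne)
  have hint : Integrable (fun x => φ' (p x) * (q x - p x)) P := by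
    simp only [mul_sub]
    exact hint_q.sub hint_p
  rw [← ENNReal.toReal_le_toReal hfin hfin_q, ← integral_toReal hφp_meas hp_lt,
    ← integral_toReal hφq_meas hq_lt]
  calc ∫ x, (φ (p x)).toReal ∂P
      ≤ ∫ x, (φ (p x)).toReal ∂P + ∫ x, φ' (p x) * (q x - p x) ∂P := by
        simp only [mul_sub, integral_sub hint_q hint_p]
        linarith
    _ = ∫ x, ((φ (p x)).toReal + φ' (p x) * (q x - p x)) ∂P := (integral_add hφp hint).symm
    _ ≤ ∫ x, (φ (q x)).toReal ∂P := integral_mono_ae (hφp.add hint) hφq htangent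

theorem stmt17_general (P : Measure X) [IsProbabilityMeasure P]
    (φ : ℝ → ℝ≥0∞) (φ' : ℝ → ℝ)
    (hconv : ConvexOn ℝ≥0 Set.univ φ)
    (hlsc : LowerSemicontinuous φ)
    (hderiv : ∀ x ∈ {y : ℝ | φ y ≠ ⊤},
      HasDerivWithinAt (fun y => (φ y).toReal) (φ' x) {y : ℝ | φ y ≠ ⊤} x)
    (l : ℕ) (g : Fin l → X → ℝ)
    (Qs : SignedMeasure X) (hQs : Qs ∈ linconSet P g)
    (hfin : div φ Qs P ≠ ⊤)
    (hlin : ∃ (c₀ : ℝ) (c : Fin l → ℝ), ∀ᵐ x ∂P,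
      φ' (Qs.rnDeriv P x) = c₀ + ∑ i, c i * g i x) :
    ∀ Q ∈ linconSet P g,
      Integrable (fun x => φ' (Qs.rnDeriv P x) * Q.rnDeriv P x) P →
      div φ Qs P ≤ div φ Q P := by
  intro Q hQ hint_Q
  obtain ⟨c₀, c, hc⟩ := hlin
  refine lintegral_comp_le_of_integral_deriv_mul_le hlsc.measurable hconv hderiv
    (Qs.measurable_rnDeriv P) (Q.measurable_rnDeriv P) hfin
    (integrable_mul_rnDeriv_of_mem_linconSet hc hQs) hint_Q ?_
  rw [integral_mul_rnDeriv_of_mem_linconSet hc hQs, integral_mul_rnDeriv_of_mem_linconSet hc hQ]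

/-- (Finite linear constraints, sufficiency.)  Let `g₁,…,g_l` be measurable,
`S = {Q ≪ P : Q(X)=1, ∫ g_i dQ = 0}`, `φ` differentiable convex, and `Qs ∈ S` with
`φ(Qs,P) < ∞`.  If `φ'(dQs/dP) = c₀ + Σ c_i g_i` `P`-a.e. for some constants, then `Qs` is a
φ-projection of `P` on `S`: `φ(Qs,P) ≤ φ(Q,P)` for all `Q ∈ S` satisfying the integrability
condition `φ'(q*)·q ∈ L¹(P)`. -/
theorem stmt17 (P : Measure X) [IsProbabilityMeasure P]
    (φ : ℝ → ℝ≥0∞) (φ' : ℝ → ℝ)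
    (hconv : ConvexOn ℝ≥0 Set.univ φ)
    (hlsc : LowerSemicontinuous φ)
    (hone : φ 1 = 0)
    (hderiv : ∀ x ∈ {y : ℝ | φ y ≠ ⊤},
      HasDerivWithinAt (fun y => (φ y).toReal) (φ' x) {y : ℝ | φ y ≠ ⊤} x)
    (l : ℕ) (g : Fin l → X → ℝ) (hg : ∀ i, Measurable (g i))
    (Qs : SignedMeasure X) (hQs : Qs ∈ linconSet P g)
    (hfin : div φ Qs P ≠ ⊤)
    (hlin : ∃ (c₀ : ℝ) (c : Fin l → ℝ), ∀ᵐ x ∂P,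
      φ' (Qs.rnDeriv P x) = c₀ + ∑ i, c i * g i x) :
    ∀ Q ∈ linconSet P g,
      Integrable (fun x => φ' (Qs.rnDeriv P x) * Q.rnDeriv P x) P →
      div φ Qs P ≤ div φ Q P :=
  stmt17_general P φ φ' hconv hlsc hderiv l g Qs hQs hfin hlin
end
end
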